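/- arXiv:2107.02910 — 9 statements merged into one kernel-verified Lean document; each statement's English description precedes it below -/
import Mathlib

section
/- Let F : [0,∞) → c₀ be defined by F(t) := (4n²t²/(t²+n²)²)_{n∈ℕ}, where c₀ is the Banach space of scalar sequences converging to zero equipped with the sup-norm. Then F is bounded, uniformly continuous, and slowly oscillating, i.e., for every ω > 0 one has lim_{t→+∞} ‖F(t+ω) − F(t)‖ = 0. -/
open Filter

private lemma key_bound (b s t : ℝ) (hb : 1 ≤ b) (hs : 0 ≤ s) (ht : 0 ≤ t) :
    |4 * b * s ^ 2 / (s ^ 2 + b) ^ 2 - 4 * b * t ^ 2 / (t ^ 2 + b) ^ 2| ≤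
      4 * b * |s ^ 2 - t ^ 2| / ((s ^ 2 + b) * (t ^ 2 + b)) := by
  have hb0 : (0 : ℝ) < b := by linarith
  have hs2 : (0 : ℝ) < s ^ 2 + b := by positivity
  have ht2 : (0 : ℝ) < t ^ 2 + b := by positivity
  have hiden : 4 * b * s ^ 2 / (s ^ 2 + b) ^ 2 - 4 * b * t ^ 2 / (t ^ 2 + b) ^ 2 =
      4 * b * (s ^ 2 - t ^ 2) * (b ^ 2 - s ^ 2 * t ^ 2) /
        ((s ^ 2 + b) ^ 2 * (t ^ 2 + b) ^ 2) := by
    field_simp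
    ring
  rw [hiden, abs_div,
    abs_of_pos (show (0:ℝ) < (s ^ 2 + b) ^ 2 * (t ^ 2 + b) ^ 2 by positivity),
    div_le_div_iff₀ (by positivity) (by positivity)]
  have h1 : |4 * b * (s ^ 2 - t ^ 2) * (b ^ 2 - s ^ 2 * t ^ 2)| =
      4 * b * |s ^ 2 - t ^ 2| * |b ^ 2 - s ^ 2 * t ^ 2| := by
    rw [abs_mul, abs_mul]
    rw [abs_of_pos (by positivity : (0:ℝ) < 4 * b)]
  rw [h1]
  have h2 : |b ^ 2 - s ^ 2 * t ^ 2| ≤ (s ^ 2 + b) * (t ^ 2 + b) := by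
    rw [abs_le]
    constructor <;> nlinarith [sq_nonneg (s * t), sq_nonneg s, sq_nonneg t, hb0]
  have h3 : (0 : ℝ) ≤ 4 * b * |s ^ 2 - t ^ 2| := by positivity
  calc 4 * b * |s ^ 2 - t ^ 2| * |b ^ 2 - s ^ 2 * t ^ 2| * ((s ^ 2 + b) * (t ^ 2 + b))
      ≤ 4 * b * |s ^ 2 - t ^ 2| * ((s ^ 2 + b) * (t ^ 2 + b)) * ((s ^ 2 + b) * (t ^ 2 + b)) := by
        have := mul_le_mul_of_nonneg_left h2 h3
        nlinarith [mul_pos hs2 ht2, this]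
    _ = 4 * b * |s ^ 2 - t ^ 2| * ((s ^ 2 + b) ^ 2 * (t ^ 2 + b) ^ 2) := by ring

private lemma lip_bound (b s t : ℝ) (hb : 1 ≤ b) (hs : 0 ≤ s) (ht : 0 ≤ t) :
    |4 * b * s ^ 2 / (s ^ 2 + b) ^ 2 - 4 * b * t ^ 2 / (t ^ 2 + b) ^ 2| ≤ 4 * |s - t| := by
  have hb0 : (0 : ℝ) < b := by linarith
  have hs2 : (0 : ℝ) < s ^ 2 + b := by positivity
  have ht2 : (0 : ℝ) < t ^ 2 + b := by positivity
  refine (key_bound b s t hb hs ht).trans ?_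
  have habs : |s ^ 2 - t ^ 2| = |s - t| * (s + t) := by
    have : s ^ 2 - t ^ 2 = (s - t) * (s + t) := by ring
    rw [this, abs_mul, abs_of_nonneg (by linarith : (0:ℝ) ≤ s + t)]
  rw [habs, div_le_iff₀ (by positivity)]
  have hkey : b * (s + t) ≤ (s ^ 2 + b) * (t ^ 2 + b) := by
    nlinarith [mul_nonneg hb0.le (sq_nonneg (s - 1)), mul_nonneg hb0.le (sq_nonneg (t - 1)),
      sq_nonneg (s * t), mul_pos hb0 hb0]
  nlinarith [mul_le_mul_of_nonneg_left hkey (abs_nonneg (s - t))]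

private lemma osc_bound (b t ω : ℝ) (hb : 1 ≤ b) (ht : 1 ≤ t) (hω : 0 ≤ ω) :
    |4 * b * (t + ω) ^ 2 / ((t + ω) ^ 2 + b) ^ 2 - 4 * b * t ^ 2 / (t ^ 2 + b) ^ 2| ≤
      ω * (2 * t + ω) / t ^ 2 := by
  have hb0 : (0 : ℝ) < b := by linarith
  have ht0 : (0 : ℝ) < t := by linarith
  have hs : (0 : ℝ) ≤ t + ω := by linarith
  have hs2 : (0 : ℝ) < (t + ω) ^ 2 + b := by positivity
  have ht2 : (0 : ℝ) < t ^ 2 + b := by positivity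
  refine (key_bound b (t + ω) t hb hs ht0.le).trans ?_
  have habs : |(t + ω) ^ 2 - t ^ 2| = ω * (2 * t + ω) := by
    rw [abs_of_nonneg (by nlinarith)]
    ring
  rw [habs, div_le_div_iff₀ (by positivity) (by positivity)]
  have h1 : 4 * b * t ^ 2 ≤ ((t + ω) ^ 2 + b) * (t ^ 2 + b) := by
    nlinarith [sq_nonneg (t ^ 2 - b), mul_nonneg (mul_nonneg hω (by linarith : (0:ℝ) ≤ 2 * t + ω)) hb0.le, mul_nonneg hω ht0.le]
  have hpos : (0 : ℝ) ≤ ω * (2 * t + ω) := by positivity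
  nlinarith [mul_le_mul_of_nonneg_left h1 hpos]

private lemma c0_norm_le (f : ZeroAtInftyContinuousMap ℕ ℝ) (C : ℝ) (hC : 0 ≤ C)
    (h : ∀ n : ℕ, |f n| ≤ C) : ‖f‖ ≤ C := by
  rw [← ZeroAtInftyContinuousMap.norm_toBCF_eq_norm,
    BoundedContinuousFunction.norm_le hC]
  intro n
  simpa [Real.norm_eq_abs] using h n

/-- **Example (pier).** The function `F : [0,∞) → c₀`, `F(t) = (4n²t²/(t²+n²)²)_{n ≥ 1}`,
is bounded, uniformly continuous, and slowly oscillating: for every `ω > 0`,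
`lim_{t → +∞} ‖F(t+ω) - F(t)‖ = 0`. (The sequence is indexed by `n ≥ 1`, encoded as
`n + 1` for `n : ℕ`.) -/
theorem stmt_4 (F : ℝ → ZeroAtInftyContinuousMap ℕ ℝ)
    (hF : ∀ t : ℝ, 0 ≤ t → ∀ n : ℕ,
      F t n = 4 * ((n : ℝ) + 1) ^ 2 * t ^ 2 / (t ^ 2 + ((n : ℝ) + 1) ^ 2) ^ 2) :
    -- bounded on `[0,∞)`
    (∃ C : ℝ, ∀ t : ℝ, 0 ≤ t → ‖F t‖ ≤ C) ∧
    -- uniformly continuous on `[0,∞)`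
    (∀ ε > (0 : ℝ), ∃ δ > (0 : ℝ), ∀ t : ℝ, 0 ≤ t → ∀ s : ℝ, 0 ≤ s →
      |t - s| < δ → ‖F t - F s‖ < ε) ∧
    -- slowly oscillating
    (∀ ω > (0 : ℝ), Tendsto (fun t : ℝ => ‖F (t + ω) - F t‖) atTop (nhds 0)) := by
  have hb : ∀ n : ℕ, (1 : ℝ) ≤ ((n : ℝ) + 1) ^ 2 := by
    intro n
    nlinarith [Nat.cast_nonneg (α := ℝ) n]
  have hsub : ∀ t s : ℝ, 0 ≤ t → 0 ≤ s → ∀ n : ℕ,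
      |(F t - F s) n| = |4 * ((n : ℝ) + 1) ^ 2 * t ^ 2 / (t ^ 2 + ((n : ℝ) + 1) ^ 2) ^ 2 -
        4 * ((n : ℝ) + 1) ^ 2 * s ^ 2 / (s ^ 2 + ((n : ℝ) + 1) ^ 2) ^ 2| := by
    intro t s ht hs n
    have : (F t - F s) n = F t n - F s n := rfl
    rw [this, hF t ht n, hF s hs n]
  refine ⟨⟨1, ?_⟩, ?_, ?_⟩
  · -- boundedness
    intro t ht
    refine c0_norm_le _ 1 zero_le_one ?_
    intro n
    rw [hF t ht n]
    set b := ((n : ℝ) + 1) ^ 2 with hbdef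
    have hb1 : (1 : ℝ) ≤ b := hb n
    have hb0 : (0 : ℝ) < b := by linarith
    rw [abs_of_nonneg (by positivity)]
    rw [div_le_one (by positivity)]
    nlinarith [sq_nonneg (t ^ 2 - b)]
  · -- uniform continuity
    intro ε hε
    refine ⟨ε / 4, by linarith, ?_⟩
    intro t ht s hs hts
    have hle : ‖F t - F s‖ ≤ 4 * |t - s| := by
      refine c0_norm_le _ _ (by positivity) ?_
      intro n
      rw [hsub t s ht hs n]
      exact lip_bound _ t s (hb n) ht hs
    calc ‖F t - F s‖ ≤ 4 * |t - s| := hle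
      _ < ε := by linarith
  · -- slowly oscillating
    intro ω hω
    have hlim : Tendsto (fun t : ℝ => ω * (2 * t + ω) / t ^ 2) atTop (nhds 0) := by
      have h1 : Tendsto (fun t : ℝ => 2 * ω * t⁻¹ + ω ^ 2 * (t⁻¹ * t⁻¹)) atTop
          (nhds (2 * ω * 0 + ω ^ 2 * (0 * 0))) := by
        exact ((tendsto_inv_atTop_zero.const_mul _).add
          ((tendsto_inv_atTop_zero.mul tendsto_inv_atTop_zero).const_mul _))
      simp only [mul_zero, add_zero, zero_mul] at h1
      refine h1.congr' ?_
      filter_upwards [eventually_gt_atTop (0 : ℝ)] with t ht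
      field_simp
    refine tendsto_of_tendsto_of_tendsto_of_le_of_le' tendsto_const_nhds hlim ?_ ?_
    · filter_upwards with t using norm_nonneg _
    · filter_upwards [eventually_ge_atTop (1 : ℝ)] with t ht
      have ht0 : (0 : ℝ) ≤ t := by linarith
      have hs0 : (0 : ℝ) ≤ t + ω := by linarith
      refine c0_norm_le _ _ (by positivity) ?_
      intro n
      rw [hsub (t + ω) t hs0 ht0 n]
      exact osc_bound _ t ω (hb n) ht hω.le
end

section
/- Let F : [0,∞) → c₀ be defined by F(t) := (4n²t²/(t²+n²)²)_{n∈ℕ}, where c₀ is the Banach space of scalar sequences converging to zero equipped with the sup-norm. Then the range F([0,∞)) is not relatively compact in c₀, i.e., the closure of {F(t) : t ≥ 0} in c₀ is not compact. -/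
/-!
At `t = 2 ^ k` the `(2 ^ k)`-th coordinate of `F t` equals `1`, while for `t ≤ 2 ^ (k - 1)` the
same coordinate is at most `16 / 25`. Hence the points `F (2 ^ k)` are pairwise at distance at
least `9 / 25`, so they have no convergent subsequence.
-/

theorem ZeroAtInftyContinuousMap.dist_apply_le_dist {α β : Type*} [TopologicalSpace α]
    [PseudoMetricSpace β] [Zero β] (f g : ZeroAtInftyContinuousMap α β) (x : α) :
    dist (f x) (g x) ≤ dist f g := by
  rw [← ZeroAtInftyContinuousMap.dist_toBCF_eq_dist]
  exact BoundedContinuousFunction.dist_coe_le_dist (f := f.toBCF) (g := g.toBCF) x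

theorem not_isCompact_of_forall_lt_le_dist {X : Type*} [PseudoMetricSpace X] {s : Set X}
    {u : ℕ → X} {ε : ℝ} (hε : 0 < ε) (hu : ∀ n, u n ∈ s)
    (hsep : ∀ ⦃i j⦄, i < j → ε ≤ dist (u i) (u j)) : ¬ IsCompact s := by
  intro hs
  obtain ⟨x, -, φ, hφ, hlim⟩ := hs.tendsto_subseq hu
  obtain ⟨N, hN⟩ := Metric.cauchySeq_iff'.1 hlim.cauchySeq ε hε
  have hclose : dist (u (φ (N + 1))) (u (φ N)) < ε := hN (N + 1) N.le_succ
  exact hclose.not_ge (dist_comm (u (φ N)) _ ▸ hsep (hφ N.lt_succ_self))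

theorem four_mul_mul_self_div_add_self_sq {x : ℝ} (hx : x ≠ 0) :
    4 * x * x / (x + x) ^ 2 = 1 := by
  field_simp
  ring

theorem four_mul_mul_div_add_sq_le {x y : ℝ} (hy : 0 ≤ y) (hxy : 4 * y ≤ x) :
    4 * x * y / (y + x) ^ 2 ≤ 16 / 25 := by
  rcases (add_nonneg hy (hy.trans (by linarith))).eq_or_lt with hsum | hsum
  · rw [← hsum]
    norm_num
  rw [div_le_iff₀ (by positivity)]
  -- `16 (x + y)² - 100 x y = 4 (4x - y) (x - 4y)`
  nlinarith [mul_nonneg (by linarith : 0 ≤ 4 * x - y) (by linarith : 0 ≤ x - 4 * y)]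

/-- **Example (pier), non-compactness of the range.** For `F : [0,∞) → c₀` defined by
`F(t) = (4n²t²/(t²+n²)²)_{n ≥ 1}`, the range `F([0,∞))` is not relatively compact in `c₀`,
i.e. the closure of `{F(t) : t ≥ 0}` is not compact. (The sequence is indexed by `n ≥ 1`,
encoded as `n + 1` for `n : ℕ`.) -/
theorem stmt_5 (F : ℝ → ZeroAtInftyContinuousMap ℕ ℝ)
    (hF : ∀ t : ℝ, 0 ≤ t → ∀ n : ℕ,
      F t n = 4 * ((n : ℝ) + 1) ^ 2 * t ^ 2 / (t ^ 2 + ((n : ℝ) + 1) ^ 2) ^ 2) :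
    ¬ IsCompact (closure (F '' Set.Ici (0 : ℝ))) := by
  have hindex (j : ℕ) : ((2 ^ j - 1 : ℕ) : ℝ) + 1 = 2 ^ j := by
    rw [Nat.cast_sub Nat.one_le_two_pow]
    push_cast
    ring
  have hsep ⦃i j : ℕ⦄ (hij : i < j) : (9 : ℝ) / 25 ≤ dist (F (2 ^ i)) (F (2 ^ j)) := by
    have hpeak : F (2 ^ j) (2 ^ j - 1) = 1 := by
      rw [hF _ (by positivity), hindex]
      exact four_mul_mul_self_div_add_self_sq (by positivity)
    have hlow : F (2 ^ i) (2 ^ j - 1) ≤ 16 / 25 := by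
      rw [hF _ (by positivity), hindex]
      refine four_mul_mul_div_add_sq_le (by positivity) ?_
      calc 4 * ((2 : ℝ) ^ i) ^ 2 = (2 ^ (i + 1)) ^ 2 := by ring
        _ ≤ (2 ^ j) ^ 2 := by gcongr; exacts [one_le_two, hij]
    calc (9 : ℝ) / 25 ≤ dist (F (2 ^ i) (2 ^ j - 1)) (F (2 ^ j) (2 ^ j - 1)) := by
          rw [Real.dist_eq, hpeak, abs_sub_comm, abs_of_nonneg (by linarith)]
          linarith
      _ ≤ dist (F (2 ^ i)) (F (2 ^ j)) := ZeroAtInftyContinuousMap.dist_apply_le_dist _ _ _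
  exact not_isCompact_of_forall_lt_le_dist (u := fun k ↦ F (2 ^ k)) (by norm_num)
    (fun k ↦ subset_closure ⟨_, Set.mem_Ici.2 (by positivity), rfl⟩) hsep
end

section
/- Let n ∈ ℕ, let X and Y be complex Banach spaces, let 𝓑 be a collection of nonempty subsets of X, and let D ⊆ I ⊆ ℝⁿ with D unbounded. Set A_I := {ω ∈ ℝⁿ ∖ {0} : ω + I ⊆ I}, assume A_I ≠ ∅, and set I' := ⋃_{ω∈A_I} {kω : k ∈ ℕ, k ≥ 1}. If a continuous function F : I × X → Y is (D,𝓑)-slowly oscillating, then F is D-quasi-asymptotically (𝓑,I')-almost periodic (i.e., D-quasi-asymptotically (𝓑,I',c)-almost periodic with c = 1). -/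
open Filter

/-- `F` is `D`-quasi-asymptotically `(𝓑,I',c)`-almost periodic. -/
def QuasiAsympAP {n : ℕ} {X Y : Type*} [NormedAddCommGroup X] [NormedSpace ℂ X]
    [NormedAddCommGroup Y] [NormedSpace ℂ Y]
    (𝓑 : Set (Set X)) (D I' : Set (EuclideanSpace ℝ (Fin n))) (c : ℂ)
    (F : EuclideanSpace ℝ (Fin n) → X → Y) : Prop :=
  ∀ B ∈ 𝓑, ∀ ε > (0 : ℝ), ∃ l > (0 : ℝ), ∀ t₀ ∈ I', ∃ τ ∈ I', ‖τ - t₀‖ ≤ l ∧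
    ∃ M > (0 : ℝ), ∀ t, t ∈ D → t + τ ∈ D → M ≤ ‖t‖ → M ≤ ‖t + τ‖ →
      ∀ x ∈ B, ‖F (t + τ) x - c • F t x‖ ≤ ε

/-- **Proposition (gasdas1), part (i).** Let `D ⊆ I ⊆ ℝⁿ` with `D` unbounded, let
`A_I = {ω ∈ ℝⁿ \ {0} : ω + I ⊆ I}` be nonempty, and set
`I' := ⋃_{ω ∈ A_I} {kω : k ∈ ℕ, k ≥ 1}`. If a continuous `F : I × X → Y` is
`(D,𝓑)`-slowly oscillating, then `F` is `D`-quasi-asymptotically `(𝓑,I')`-almost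
periodic (i.e. with `c = 1`). -/
theorem stmt_11 {n : ℕ} {X Y : Type*}
    [NormedAddCommGroup X] [NormedSpace ℂ X] [CompleteSpace X]
    [NormedAddCommGroup Y] [NormedSpace ℂ Y] [CompleteSpace Y]
    (𝓑 : Set (Set X)) (h𝓑 : ∀ B ∈ 𝓑, B.Nonempty)
    (I D : Set (EuclideanSpace ℝ (Fin n)))
    (hDI : D ⊆ I) (hDunb : ¬ Bornology.IsBounded D)
    (A_I : Set (EuclideanSpace ℝ (Fin n)))
    (hAI : A_I = {ω | ω ≠ 0 ∧ ∀ t ∈ I, t + ω ∈ I})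
    (hAIne : A_I.Nonempty)
    (F : EuclideanSpace ℝ (Fin n) → X → Y)
    (hFcont : ContinuousOn (fun p : EuclideanSpace ℝ (Fin n) × X => F p.1 p.2) (I ×ˢ Set.univ))
    -- `F` is `(D,𝓑)`-slowly oscillating:
    (hso : ∀ B ∈ 𝓑, ∀ ω ∈ A_I, ∀ ε > (0 : ℝ), ∃ M : ℝ, ∀ t ∈ D, M ≤ ‖t‖ →
      ∀ x ∈ B, ‖F (t + ω) x - F t x‖ < ε) :
    QuasiAsympAP 𝓑 D {v | ∃ ω ∈ A_I, ∃ k : ℕ, 1 ≤ k ∧ v = (k : ℝ) • ω} 1 F := by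
  intro B hB ε hε
  refine ⟨1, one_pos, ?_⟩
  rintro t₀ ⟨ω, hω, k, hk, rfl⟩
  rw [hAI] at hω
  obtain ⟨hω0, hωI⟩ := hω
  -- k•ω is again in A_I
  have hkI : ∀ m : ℕ, ∀ t ∈ I, t + (m : ℝ) • ω ∈ I := by
    intro m
    induction m with
    | zero => intro t ht; simpa using ht
    | succ m ih =>
      intro t ht
      have : t + ((m : ℝ) + 1) • ω = (t + (m : ℝ) • ω) + ω := by
        rw [add_smul, one_smul, add_assoc]
      push_cast
      rw [this]
      exact hωI _ (ih t ht)
  have hkA : (k : ℝ) • ω ∈ A_I := by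
    rw [hAI]
    refine ⟨smul_ne_zero ?_ hω0, hkI k⟩
    exact_mod_cast Nat.one_le_iff_ne_zero.mp hk
  obtain ⟨M, hM⟩ := hso B hB _ hkA ε hε
  refine ⟨(k : ℝ) • ω, ⟨ω, by rw [hAI]; exact ⟨hω0, hωI⟩, k, hk, rfl⟩, by simp, max M 1,
    lt_max_of_lt_right one_pos, ?_⟩
  intro t htD _ htM _ x hx
  have := hM t htD (le_trans (le_max_left _ _) htM) x hx
  simpa using this.le
end

section
/- Let n ∈ ℕ, let X and Y be complex Banach spaces, let 𝓑 be a collection of nonempty subsets of X, and for each j ∈ {1,…,n} let D_j ⊆ I ⊆ ℝⁿ with D_j unbounded. Set B_I := {(ω_1,…,ω_n) ∈ (ℝ ∖ {0})ⁿ : ω_j·e_j + I ⊆ I for all j ∈ {1,…,n}}, where (e_1,…,e_n) is the standard basis of ℝⁿ. For each ω = (ω_1,…,ω_n) ∈ B_I let D_ω be the set of all t ∈ D_n such that t + Σ_{i=j+1}^{n} ω_i·e_i ∈ D_j for all j ∈ {1,…,n−1}, and assume moreover that each D_ω is unbounded and that the set 𝒟 := ⋂_{ω∈B_I} D_ω is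 unbounded. Set I' := ⋃_{ω∈B_I∩I} {kω : k ∈ ℕ, k ≥ 1}, assumed nonempty. If F : I × X → Y is (𝓑,(D_j)_{j∈{1,…,n}})-slowly oscillating, then F is 𝒟-quasi-asymptotically (𝓑,I')-almost periodic (i.e., 𝒟-quasi-asymptotically (𝓑,I',c)-almost periodic with c = 1). -/
open Filter

lemma euc_single_zero {n : ℕ} (j : Fin n) : EuclideanSpace.single j (0:ℝ) = 0 := by
  ext i; simp [EuclideanSpace.single_apply]

lemma euc_single_add {n : ℕ} (j : Fin n) (a b : ℝ) :
    EuclideanSpace.single j (a + b) = EuclideanSpace.single j a + EuclideanSpace.single j b := by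
  ext i; simp [EuclideanSpace.single_apply]; split <;> simp <;> rfl

lemma euc_single_smul {n : ℕ} (j : Fin n) (a b : ℝ) :
    EuclideanSpace.single j (a * b) = a • EuclideanSpace.single j b := by
  ext i; simp [EuclideanSpace.single_apply]


/-- **Proposition (gasdas1), part (ii).** Let `D_j ⊆ I ⊆ ℝⁿ` be unbounded, let
`B_I = {(ω_1,…,ω_n) ∈ (ℝ \ {0})ⁿ : ω_j e_j + I ⊆ I for all j}`, for `ω ∈ B_I` let `D_ω`
consist of all `t ∈ D_n` with `t + Σ_{i=j+1}^n ω_i e_i ∈ D_j` for all `j ∈ {1,…,n-1}`,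
assume each `D_ω` and `𝒟 := ⋂_{ω ∈ B_I} D_ω` are unbounded, and set
`I' := ⋃_{ω ∈ B_I ∩ I} {kω : k ≥ 1}`, assumed nonempty. If `F : I × X → Y` is
`(𝓑,(D_j)_j)`-slowly oscillating, then `F` is `𝒟`-quasi-asymptotically `(𝓑,I')`-almost
periodic (i.e. with `c = 1`). (Indices are `0`-based: `j : Fin n` corresponds to `j+1`.) -/
theorem stmt_12 {n : ℕ} (hn : 0 < n) {X Y : Type*}
    [NormedAddCommGroup X] [NormedSpace ℂ X] [CompleteSpace X]
    [NormedAddCommGroup Y] [NormedSpace ℂ Y] [CompleteSpace Y]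
    (𝓑 : Set (Set X)) (h𝓑 : ∀ B ∈ 𝓑, B.Nonempty)
    (I : Set (EuclideanSpace ℝ (Fin n)))
    (Dj : Fin n → Set (EuclideanSpace ℝ (Fin n)))
    (hDjI : ∀ j, Dj j ⊆ I) (hDjunb : ∀ j, ¬ Bornology.IsBounded (Dj j))
    (B_I : Set (Fin n → ℝ))
    (hBI : B_I = {ω | (∀ j, ω j ≠ 0) ∧
      ∀ j : Fin n, ∀ t ∈ I, t + EuclideanSpace.single j (ω j) ∈ I})
    (Dom : (Fin n → ℝ) → Set (EuclideanSpace ℝ (Fin n)))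
    (hDom : ∀ ω : Fin n → ℝ, Dom ω = {t | t ∈ Dj ⟨n - 1, Nat.sub_lt hn Nat.one_pos⟩ ∧
      ∀ j : Fin n, (j : ℕ) + 1 < n →
        t + ∑ i ∈ Finset.univ.filter (fun i => j < i), EuclideanSpace.single i (ω i) ∈ Dj j})
    (hDomunb : ∀ ω ∈ B_I, ¬ Bornology.IsBounded (Dom ω))
    (𝒟 : Set (EuclideanSpace ℝ (Fin n))) (h𝒟 : 𝒟 = ⋂ ω ∈ B_I, Dom ω)
    (h𝒟unb : ¬ Bornology.IsBounded 𝒟)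
    (I' : Set (EuclideanSpace ℝ (Fin n)))
    (hI' : I' = {v | ∃ ω ∈ B_I, (∑ j, EuclideanSpace.single j (ω j)) ∈ I ∧
      ∃ k : ℕ, 1 ≤ k ∧ v = (k : ℝ) • ∑ j, EuclideanSpace.single j (ω j)})
    (hI'ne : I'.Nonempty)
    (F : EuclideanSpace ℝ (Fin n) → X → Y)
    (hFcont : ContinuousOn (fun p : EuclideanSpace ℝ (Fin n) × X => F p.1 p.2) (I ×ˢ Set.univ))
    -- `F` is `(𝓑,(D_j)_{j ∈ ℕ_n})`-slowly oscillating: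
    (hso : ∀ B ∈ 𝓑, ∀ ω ∈ B_I, ∀ j : Fin n, ∀ ε > (0 : ℝ), ∃ M : ℝ, ∀ t ∈ Dj j, M ≤ ‖t‖ →
      ∀ x ∈ B, ‖F (t + EuclideanSpace.single j (ω j)) x - F t x‖ < ε) :
    QuasiAsympAP 𝓑 𝒟 I' 1 F := by
  intro B hB ε hε
  refine ⟨1, one_pos, ?_⟩
  intro t₀ ht₀
  refine ⟨t₀, ht₀, by simp, ?_⟩
  have ht₀' := ht₀
  rw [hI'] at ht₀'
  obtain ⟨ω, hω, hσI, k, hk, hτ⟩ := ht₀'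
  have hωmem := hω
  rw [hBI] at hωmem
  set ω' : Fin n → ℝ := fun j => (k : ℝ) * ω j with hω'def
  have hkR : (k : ℝ) ≠ 0 := Nat.cast_ne_zero.mpr (by omega)
  -- kω ∈ B_I
  have hiter : ∀ (j : Fin n) (m : ℕ), ∀ t ∈ I, t + EuclideanSpace.single j ((m : ℝ) * ω j) ∈ I := by
    intro j m
    induction m with
    | zero => intro t ht; simpa [euc_single_zero] using ht
    | succ m ih =>
      intro t ht
      have : ((m + 1 : ℕ) : ℝ) * ω j = (m : ℝ) * ω j + ω j := by push_cast; ring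
      rw [this, euc_single_add, ← add_assoc]
      exact hωmem.2 j _ (ih t ht)
  have hω'BI : ω' ∈ B_I := by
    rw [hBI]
    exact ⟨fun j => mul_ne_zero hkR (hωmem.1 j), fun j t ht => hiter j k t ht⟩
  have hτsum : t₀ = ∑ i, EuclideanSpace.single i (ω' i) := by
    rw [hτ, Finset.smul_sum]
    exact Finset.sum_congr rfl fun i _ => (euc_single_smul i (k : ℝ) (ω i)).symm
  -- constants
  set C : ℝ := ∑ i, ‖EuclideanSpace.single i (ω' i)‖ with hCdef
  have hC : 0 ≤ C := Finset.sum_nonneg fun _ _ => norm_nonneg _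
  have hεn : (0 : ℝ) < ε / n := div_pos hε (by exact_mod_cast hn)
  choose Mf hMf using fun j => hso B hB ω' hω'BI j (ε / n) hεn
  have hMsum : (0 : ℝ) ≤ ∑ j, max (Mf j) 0 :=
    Finset.sum_nonneg fun j _ => le_max_right _ _
  refine ⟨(∑ j, max (Mf j) 0) + C + 1, by linarith, ?_⟩
  intro t ht _ hMt _ x hx
  rw [one_smul]
  have htDom : t ∈ Dom ω' := by
    rw [h𝒟] at ht
    simp only [Set.mem_iInter] at ht
    exact ht ω' hω'BI
  rw [hDom] at htDom
  obtain ⟨htD, htD2⟩ := htDom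
  set g : ℕ → Y := fun m =>
    F (t + ∑ i ∈ Finset.univ.filter (fun i : Fin n => n - m ≤ (i : ℕ)),
        EuclideanSpace.single i (ω' i)) x with hgdef
  have hg0 : g 0 = F t x := by
    have h1 : Finset.univ.filter (fun i : Fin n => n - 0 ≤ (i : ℕ)) = ∅ := by
      ext i
      simp only [Finset.mem_filter, Finset.mem_univ, true_and, Finset.notMem_empty, iff_false]
      omega
    simp only [hgdef, h1, Finset.sum_empty, add_zero]
  have hgn : g n = F (t + t₀) x := by
    have h1 : Finset.univ.filter (fun i : Fin n => n - n ≤ (i : ℕ)) = Finset.univ := by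
      ext i; simp
    simp only [hgdef, h1, ← hτsum]
  have key : ∀ m, m < n → ‖g (m + 1) - g m‖ ≤ ε / n := by
    intro m hm
    have hjlt : n - 1 - m < n := by omega
    set j : Fin n := ⟨n - 1 - m, hjlt⟩ with hjdef
    set s : EuclideanSpace ℝ (Fin n) :=
      t + ∑ i ∈ Finset.univ.filter (fun i : Fin n => n - m ≤ (i : ℕ)),
        EuclideanSpace.single i (ω' i) with hsdef
    have hjnot : j ∉ Finset.univ.filter (fun i : Fin n => n - m ≤ (i : ℕ)) := by
      simp only [Finset.mem_filter, Finset.mem_univ, true_and, hjdef]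
      omega
    have hf2 : Finset.univ.filter (fun i : Fin n => n - (m + 1) ≤ (i : ℕ)) =
        insert j (Finset.univ.filter (fun i : Fin n => n - m ≤ (i : ℕ))) := by
      ext i
      simp only [Finset.mem_filter, Finset.mem_univ, true_and, Finset.mem_insert, Fin.ext_iff,
        hjdef]
      omega
    have e1 : g (m + 1) = F (s + EuclideanSpace.single j (ω' j)) x := by
      simp only [hgdef]
      congr 1
      rw [hf2, Finset.sum_insert hjnot, hsdef]
      abel
    have e0 : g m = F s x := rfl
    -- s ∈ Dj j
    have hsDj : s ∈ Dj j := by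
      have hf1 : Finset.univ.filter (fun i : Fin n => n - m ≤ (i : ℕ)) =
          Finset.univ.filter (fun i : Fin n => j < i) := by
        ext i
        simp only [Finset.mem_filter, Finset.mem_univ, true_and, Fin.lt_def, hjdef]
        omega
      rcases Nat.eq_zero_or_pos m with hm0 | hm0
      · have hempty : Finset.univ.filter (fun i : Fin n => n - m ≤ (i : ℕ)) = ∅ := by
          ext i
          simp only [Finset.mem_filter, Finset.mem_univ, true_and, Finset.notMem_empty, iff_false]
          omega
        have hj : j = ⟨n - 1, Nat.sub_lt hn Nat.one_pos⟩ := by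
          simp only [Fin.ext_iff, hjdef]; omega
        rw [hsdef, hempty, Finset.sum_empty, add_zero, hj]
        exact htD
      · have hjn : (j : ℕ) + 1 < n := by simp only [hjdef]; omega
        rw [hsdef, hf1]
        exact htD2 j hjn
    -- norm bound
    have hvle : ‖∑ i ∈ Finset.univ.filter (fun i : Fin n => n - m ≤ (i : ℕ)),
        EuclideanSpace.single i (ω' i)‖ ≤ C := by
      refine (norm_sum_le _ _).trans ?_
      rw [hCdef]
      exact Finset.sum_le_sum_of_subset_of_nonneg (Finset.filter_subset _ _)
        (fun _ _ _ => norm_nonneg _)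
    have hMj : Mf j ≤ ∑ i, max (Mf i) 0 := by
      calc Mf j ≤ max (Mf j) 0 := le_max_left _ _
        _ ≤ ∑ i, max (Mf i) 0 :=
          Finset.single_le_sum (f := fun i => max (Mf i) 0) (fun i _ => le_max_right _ _) (Finset.mem_univ j)
    have htnorm : ‖t‖ ≤ ‖s‖ + C := by
      have h1 : ‖t‖ ≤ ‖s‖ + ‖∑ i ∈ Finset.univ.filter (fun i : Fin n => n - m ≤ (i : ℕ)),
          EuclideanSpace.single i (ω' i)‖ := by
        have : t = s - ∑ i ∈ Finset.univ.filter (fun i : Fin n => n - m ≤ (i : ℕ)),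
            EuclideanSpace.single i (ω' i) := by rw [hsdef]; abel
        rw [this]
        exact norm_sub_le _ _
      linarith
    have hsM : Mf j ≤ ‖s‖ := by linarith
    rw [e1, e0]
    exact le_of_lt (hMf j s hsDj hsM x hx)
  calc ‖F (t + t₀) x - F t x‖
      = ‖∑ m ∈ Finset.range n, (g (m + 1) - g m)‖ := by
        rw [Finset.sum_range_sub, hg0, hgn]
    _ ≤ ∑ m ∈ Finset.range n, ‖g (m + 1) - g m‖ := norm_sum_le _ _
    _ ≤ ∑ m ∈ Finset.range n, ε / n :=
        Finset.sum_le_sum fun m hm => key m (Finset.mem_range.mp hm)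
    _ = ε := by
        rw [Finset.sum_const, Finset.card_range, nsmul_eq_mul]
        field_simp
end

section
/- Let n ∈ ℕ and let Y be a complex Banach space. Every slowly oscillating function F : ℝⁿ → Y is quasi-asymptotically almost periodic, i.e., for every ε > 0 there exists l > 0 such that for each t₀ ∈ ℝⁿ there exist τ ∈ ℝⁿ with |τ − t₀| ≤ l and a real number M > 0 such that ‖F(t+τ) − F(t)‖_Y ≤ ε whenever |t| ≥ M and |t+τ| ≥ M. -/
open Filter

/-- **Slowly oscillating implies quasi-asymptotically almost periodic on `ℝⁿ`.**
Every slowly oscillating function `F : ℝⁿ → Y` is quasi-asymptotically almost periodic: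
for every `ε > 0` there is `l > 0` such that every `t₀ ∈ ℝⁿ` admits `τ` with
`|τ - t₀| ≤ l` and `M > 0` with `‖F(t+τ) - F(t)‖ ≤ ε` whenever `|t| ≥ M` and
`|t+τ| ≥ M`. -/
theorem stmt_13 {n : ℕ} {Y : Type*}
    [NormedAddCommGroup Y] [NormedSpace ℂ Y] [CompleteSpace Y]
    (F : EuclideanSpace ℝ (Fin n) → Y) (hFcont : Continuous F)
    -- `F` is slowly oscillating:
    (hso : ∀ ω : EuclideanSpace ℝ (Fin n), ω ≠ 0 → ∀ ε > (0 : ℝ), ∃ M : ℝ,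
      ∀ t : EuclideanSpace ℝ (Fin n), M ≤ ‖t‖ → ‖F (t + ω) - F t‖ < ε) :
    -- `F` is quasi-asymptotically almost periodic:
    ∀ ε > (0 : ℝ), ∃ l > (0 : ℝ), ∀ t₀ : EuclideanSpace ℝ (Fin n),
      ∃ τ : EuclideanSpace ℝ (Fin n), ‖τ - t₀‖ ≤ l ∧
        ∃ M > (0 : ℝ), ∀ t : EuclideanSpace ℝ (Fin n),
          M ≤ ‖t‖ → M ≤ ‖t + τ‖ → ‖F (t + τ) - F t‖ ≤ ε := by
  intro ε hε
  refine ⟨1, one_pos, fun t₀ => ⟨t₀, by simp, ?_⟩⟩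
  by_cases h0 : t₀ = 0
  · exact ⟨1, one_pos, fun t _ _ => by simp [h0, hε.le]⟩
  · obtain ⟨M, hM⟩ := hso t₀ h0 ε hε
    exact ⟨max M 1, lt_max_of_lt_right one_pos,
      fun t ht _ => (hM t (le_trans (le_max_left _ _) ht)).le⟩
end

section
/- Let f : ℝ → ℝ be defined by f(t) := Σ_{n=1}^{∞} (1/n)·sin²(t/2ⁿ). Then f is not quasi-asymptotically almost periodic; i.e., it is not the case that for every ε > 0 there exists l > 0 such that every subinterval of ℝ of length l contains a number τ for which there exists M > 0 with |f(t+τ) − f(t)| ≤ ε whenever |t| ≥ M and |t+τ| ≥ M. -/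
open Real Finset

namespace Stmt14


noncomputable def g (t : ℝ) (k : ℕ) : ℝ := (1 / ((k : ℝ) + 1)) * Real.sin (t / 2 ^ (k + 1)) ^ 2

lemma g_nonneg (t : ℝ) (k : ℕ) : 0 ≤ g t k := by unfold g; positivity

lemma g_le (t : ℝ) (k : ℕ) : g t k ≤ t ^ 2 * (1/4 : ℝ) ^ k := by
  unfold g
  have h1 : Real.sin (t / 2 ^ (k + 1)) ^ 2 ≤ (t / 2 ^ (k + 1)) ^ 2 := Real.sin_sq_le_sq
  have h2 : (1 : ℝ) / ((k : ℝ) + 1) ≤ 1 := by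
    rw [div_le_one (by positivity)]; linarith [Nat.cast_nonneg (α := ℝ) k]
  have h3 : (t / 2 ^ (k + 1)) ^ 2 ≤ t ^ 2 * (1/4 : ℝ) ^ k := by
    rw [div_pow]
    rw [div_le_iff₀ (by positivity)]
    have : ((2:ℝ) ^ (k+1)) ^ 2 = 4 * 4 ^ k := by
      rw [← pow_mul]; rw [show (4:ℝ) = 2^2 by norm_num, ← pow_mul]; ring_nf
    rw [this]
    have h4 : (1/4:ℝ)^k * 4^k = 1 := by
      rw [← mul_pow]; norm_num
    nlinarith [sq_nonneg t, pow_pos (show (0:ℝ) < 4 by norm_num) k, sq_nonneg (t * (1/4:ℝ)^k)]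
  calc (1 / ((k : ℝ) + 1)) * Real.sin (t / 2 ^ (k + 1)) ^ 2
      ≤ 1 * (t / 2 ^ (k + 1)) ^ 2 := by
        apply mul_le_mul h2 h1 (sq_nonneg _) one_pos.le
    _ = (t / 2 ^ (k + 1)) ^ 2 := one_mul _
    _ ≤ t ^ 2 * (1/4 : ℝ) ^ k := h3

lemma summable_g (t : ℝ) : Summable (g t) :=
  Summable.of_nonneg_of_le (g_nonneg t) (g_le t)
    ((summable_geometric_of_lt_one (by norm_num) (by norm_num)).mul_left _)



lemma sinsq_lip (a b : ℝ) : |Real.sin a ^ 2 - Real.sin b ^ 2| ≤ |a - b| := by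
  have ha := Real.sin_sq_eq_half_sub a
  have hb := Real.sin_sq_eq_half_sub b
  have h : Real.sin a ^ 2 - Real.sin b ^ 2 = (Real.cos (2*b) - Real.cos (2*a)) / 2 := by
    rw [ha, hb]; ring
  rw [h, Real.cos_sub_cos]
  have h1 : |Real.sin ((2*b + 2*a)/2)| ≤ 1 := Real.abs_sin_le_one _
  have h2 : |Real.sin ((2*b - 2*a)/2)| ≤ |(2*b - 2*a)/2| := Real.abs_sin_le_abs
  have h3 : |(2*b - 2*a)/2| = |a - b| := by
    rw [show (2*b - 2*a)/2 = -(a - b) by ring, abs_neg]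
  calc |(-2 * Real.sin ((2*b + 2*a)/2) * Real.sin ((2*b - 2*a)/2)) / 2|
      = |Real.sin ((2*b + 2*a)/2)| * |Real.sin ((2*b - 2*a)/2)| := by
        rw [abs_div, abs_mul, abs_mul]; simp; ring
    _ ≤ 1 * |(2*b - 2*a)/2| := mul_le_mul h1 h2 (abs_nonneg _) zero_le_one
    _ = |a - b| := by rw [one_mul, h3]

lemma sinsq_nat_pi_add (n : ℕ) (x : ℝ) : Real.sin ((n:ℝ) * π + x) ^ 2 = Real.sin x ^ 2 := by
  induction n with
  | zero => simp
  | succ n ih =>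
    have : ((n+1 : ℕ):ℝ) * π + x = ((n:ℝ) * π + x) + π := by push_cast; ring
    rw [this, Real.sin_add_pi, neg_pow, ih]; ring

lemma sinsq_two_thirds (j : ℕ) : Real.sin ((2*π/3) * 2 ^ j) ^ 2 = 3/4 := by
  induction j with
  | zero =>
    have : (2*π/3) * 2 ^ 0 = π - π/3 := by ring
    rw [this, Real.sin_pi_sub, Real.sin_pi_div_three]
    rw [div_pow, Real.sq_sqrt (by norm_num)]; norm_num
  | succ j ih =>
    have h : (2*π/3) * 2 ^ (j+1) = 2 * ((2*π/3) * 2 ^ j) := by ring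
    rw [h, Real.sin_two_mul]
    have hpc := Real.sin_sq_add_cos_sq ((2*π/3) * 2 ^ j)
    nlinarith [ih]


lemma upper (N : ℕ) : ∑' k, g ((2:ℝ)^N * π) k ≤ π^2/3 := by
  set t := (2:ℝ)^N * π with ht
  rw [← Summable.sum_add_tsum_nat_add N (summable_g t)]
  have h1 : ∑ k ∈ range N, g t k = 0 := by
    apply sum_eq_zero
    intro k hk
    have hkN : k + 1 ≤ N := mem_range.1 hk
    have : t / 2 ^ (k+1) = (2:ℝ)^(N - (k+1)) * π := by
      rw [ht, pow_sub₀ (2:ℝ) two_ne_zero hkN]; ring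
    unfold g
    rw [this]
    have : Real.sin ((2:ℝ)^(N-(k+1)) * π) = 0 := by
      have h2 : ((2:ℝ)^(N-(k+1))) * π = ((2^(N-(k+1)) : ℕ) : ℝ) * π := by push_cast; ring
      rw [h2, Real.sin_nat_mul_pi]
    rw [this]; ring
  rw [h1, zero_add]
  have hsum2 : Summable (fun i : ℕ => g t (i + N)) := (summable_g t).comp_injective (add_left_injective N)
  have hgeo : Summable (fun i : ℕ => π^2/4 * (1/4:ℝ)^i) :=
    (summable_geometric_of_lt_one (by norm_num) (by norm_num)).mul_left _
  have hle : ∀ i : ℕ, g t (i + N) ≤ π^2/4 * (1/4:ℝ)^i := by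
    intro i
    unfold g
    have harg : t / 2 ^ (i + N + 1) = π / 2 ^ (i+1) := by
      rw [ht, show i + N + 1 = N + (i+1) by ring, pow_add]
      field_simp
    rw [harg]
    have h2 : Real.sin (π / 2 ^ (i+1)) ^ 2 ≤ (π / 2 ^ (i+1)) ^ 2 := Real.sin_sq_le_sq
    have h3 : (1:ℝ) / ((i + N : ℕ) + 1) ≤ 1 := by
      rw [div_le_one (by positivity)]; linarith [Nat.cast_nonneg (α := ℝ) (i+N)]
    have h4 : (π / 2 ^ (i+1)) ^ 2 = π^2/4 * (1/4:ℝ)^i := by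
      have e : ((2:ℝ) ^ (i+1))^2 = 4 * 4^i := by
        rw [← pow_mul, show (i+1)*2 = 2 + 2*i by ring, pow_add, pow_mul]; norm_num
      rw [div_pow, e, one_div_pow, mul_one_div, div_div]
    calc (1 / ((i + N : ℕ) + 1 : ℝ)) * Real.sin (π / 2 ^ (i+1)) ^ 2
        ≤ 1 * (π / 2 ^ (i+1)) ^ 2 := mul_le_mul h3 h2 (sq_nonneg _) one_pos.le
      _ = π^2/4 * (1/4:ℝ)^i := by rw [one_mul, h4]
  calc ∑' i, g t (i + N) ≤ ∑' i, π^2/4 * (1/4:ℝ)^i := Summable.tsum_le_tsum hle hsum2 hgeo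
    _ = π^2/4 * (4/3) := by
        rw [tsum_mul_left, tsum_geometric_of_lt_one (by norm_num) (by norm_num)]; norm_num
    _ = π^2/3 := by ring

lemma lower (m Q N : ℕ) (hmQ : m ≤ Q) (hQN : Q ≤ N) (l τ : ℝ) (hl0 : 0 ≤ l) (hl : l ≤ 2 ^ m)
    (hτ : |τ - (2*π/3) * 2^Q| ≤ l) (hH : (12:ℝ) ≤ ∑ k ∈ Ico m Q, 1/((k:ℝ)+1)) :
    (8:ℝ) ≤ ∑' k, g ((2:ℝ)^N * π + τ) k := by
  set t := (2:ℝ)^N * π + τ with htdef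
  have key : ∀ k ∈ Ico m Q, (3/4) * (1/((k:ℝ)+1)) - l * (1/2:ℝ)^(k+1) ≤ g t k := by
    intro k hk
    obtain ⟨hmk, hkQ⟩ := mem_Ico.1 hk
    have hQk : k + 1 ≤ Q := hkQ
    have hk1N : k + 1 ≤ N := le_trans hQk hQN
    have h0 : ((2:ℝ)^N * π)/2^(k+1) = ((2^(N-(k+1)) : ℕ):ℝ) * π := by
      push_cast
      rw [pow_sub₀ (2:ℝ) two_ne_zero hk1N]
      ring
    have hg : g t k = (1/((k:ℝ)+1)) * Real.sin (τ / 2^(k+1)) ^ 2 := by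
      unfold g
      rw [htdef, add_div, h0, sinsq_nat_pi_add]
    have hcenter : Real.sin ((2*π/3) * 2^Q / 2^(k+1)) ^ 2 = 3/4 := by
      have e : (2*π/3) * 2^Q / 2^(k+1) = (2*π/3) * 2^(Q-(k+1)) := by
        rw [pow_sub₀ (2:ℝ) two_ne_zero hQk]; ring
      rw [e, sinsq_two_thirds]
    have hlip := sinsq_lip (τ / 2^(k+1)) ((2*π/3) * 2^Q / 2^(k+1))
    have hdist : |τ / 2^(k+1) - (2*π/3) * 2^Q / 2^(k+1)| ≤ l * (1/2:ℝ)^(k+1) := by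
      rw [div_sub_div_same, abs_div, abs_of_pos (show (0:ℝ) < 2^(k+1) by positivity)]
      rw [one_div_pow, div_le_iff₀ (show (0:ℝ) < 2^(k+1) by positivity)]
      rw [mul_assoc, one_div_mul_cancel (show ((2:ℝ)^(k+1)) ≠ 0 by positivity), mul_one]
      exact hτ
    have hs : 3/4 - l * (1/2:ℝ)^(k+1) ≤ Real.sin (τ / 2^(k+1)) ^ 2 := by
      rw [hcenter] at hlip
      have h2 := abs_le.1 (hlip.trans hdist)
      linarith [h2.1]
    rw [hg]
    have hk1 : (0:ℝ) < (k:ℝ)+1 := by positivity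
    have hfrac : (1:ℝ)/((k:ℝ)+1) ≤ 1 := by
      rw [div_le_one hk1]; linarith [Nat.cast_nonneg (α:=ℝ) k]
    have hx : (0:ℝ) ≤ l * (1/2:ℝ)^(k+1) :=
      mul_nonneg hl0 (pow_nonneg (by norm_num) _)
    have hfrac0 : (0:ℝ) < 1/((k:ℝ)+1) := by positivity
    nlinarith [sq_nonneg (Real.sin (τ / 2^(k+1)))]
  have hsum1 : ∑ k ∈ Ico m Q, ((3/4) * (1/((k:ℝ)+1)) - l * (1/2:ℝ)^(k+1)) ≤ ∑ k ∈ Ico m Q, g t k :=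
    sum_le_sum key
  have hsplit : ∑ k ∈ Ico m Q, ((3/4) * (1/((k:ℝ)+1)) - l * (1/2:ℝ)^(k+1))
      = (3/4) * (∑ k ∈ Ico m Q, 1/((k:ℝ)+1)) - l * ∑ k ∈ Ico m Q, (1/2:ℝ)^(k+1) := by
    rw [sum_sub_distrib, mul_sum, mul_sum]
  have hgeom : ∑ k ∈ Ico m Q, ((1:ℝ)/2)^(k+1) ≤ (1/2)^m := by
    have hgs := geom_sum_Ico (show (1/2:ℝ) ≠ 1 by norm_num) hmQ
    have h2 : ∑ k ∈ Ico m Q, ((1:ℝ)/2)^(k+1) = (1/2) * ∑ k ∈ Ico m Q, ((1:ℝ)/2)^k := by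
      rw [mul_sum]; apply sum_congr rfl; intro k _; rw [pow_succ]; ring
    rw [h2, hgs]
    have h0 : (0:ℝ) ≤ (1/2)^Q := by positivity
    have h3 : ((1:ℝ)/2)^Q ≤ (1/2)^m := pow_le_pow_of_le_one (by norm_num) (by norm_num) hmQ
    rw [show ((1:ℝ)/2 - 1) = -(1/2) by norm_num, div_neg, div_div_eq_mul_div, div_eq_mul_inv]
    nlinarith
  have hgeom0 : (0:ℝ) ≤ ∑ k ∈ Ico m Q, ((1:ℝ)/2)^(k+1) :=
    sum_nonneg fun k _ => pow_nonneg (by norm_num) _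
  have hone : ((2:ℝ)^m) * (1/2)^m = 1 := by
    rw [← mul_pow]; norm_num
  have hlg : l * ∑ k ∈ Ico m Q, ((1:ℝ)/2)^(k+1) ≤ 1 := by
    calc l * ∑ k ∈ Ico m Q, ((1:ℝ)/2)^(k+1) ≤ (2^m) * (1/2)^m := by
          apply mul_le_mul hl hgeom hgeom0 (by positivity)
      _ = 1 := hone
  have hfin : (8:ℝ) ≤ ∑ k ∈ Ico m Q, g t k := by
    rw [hsplit] at hsum1
    linarith
  exact hfin.trans (Summable.sum_le_tsum _ (fun k _ => g_nonneg t k) (summable_g t))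

end Stmt14

open Real Finset Stmt14 in
/-- **Example (merak).** The Haraux–Souplet function
`f(t) = Σ_{n=1}^∞ (1/n)·sin²(t/2ⁿ)` is not quasi-asymptotically almost periodic.
(The series is indexed by `n ≥ 1`, encoded as `k + 1` for `k : ℕ`.) -/
theorem stmt_14 (f : ℝ → ℝ)
    (hf : ∀ t : ℝ, f t = ∑' k : ℕ, (1 / ((k : ℝ) + 1)) * Real.sin (t / 2 ^ (k + 1)) ^ 2) :
    ¬ (∀ ε > (0 : ℝ), ∃ l > (0 : ℝ), ∀ t₀ : ℝ, ∃ τ : ℝ, |τ - t₀| ≤ l ∧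
      ∃ M > (0 : ℝ), ∀ t : ℝ, M ≤ |t| → M ≤ |t + τ| → |f (t + τ) - f t| ≤ ε) := by
  intro H
  obtain ⟨l, hl0, H⟩ := H 1 one_pos
  obtain ⟨m, hm⟩ := pow_unbounded_of_one_lt l (one_lt_two (α := ℝ))
  -- choose Q ≥ m with a large harmonic block
  obtain ⟨Q0, hQ0⟩ := Filter.eventually_atTop.1
    (Filter.tendsto_atTop.1 Real.tendsto_sum_range_one_div_nat_succ_atTop
      ((∑ i ∈ range m, (1/((i:ℝ)+1))) + 12))
  set Q := max Q0 m with hQdef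
  have hmQ : m ≤ Q := le_max_right _ _
  have hH : (12:ℝ) ≤ ∑ k ∈ Ico m Q, 1/((k:ℝ)+1) := by
    have h1 := hQ0 Q (le_max_left _ _)
    rw [sum_Ico_eq_sub _ hmQ]
    linarith
  obtain ⟨τ, hττ, M, hM, hgood⟩ := H ((2*π/3) * 2^Q)
  obtain ⟨N1, hN1⟩ := pow_unbounded_of_one_lt M (one_lt_two (α := ℝ))
  set N := max Q N1 with hNdef
  have hQN : Q ≤ N := le_max_left _ _
  have hπ3 : (3:ℝ) < π := Real.pi_gt_three
  have h2N : (2:ℝ)^N1 ≤ 2^N := pow_le_pow_right₀ (by norm_num) (le_max_right _ _)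
  have htpos : (0:ℝ) < 2^N * π := by positivity
  have hMt : M ≤ |(2:ℝ)^N * π| := by
    rw [abs_of_pos htpos]
    have : (2:ℝ)^N ≤ 2^N * π := by nlinarith [pow_pos (show (0:ℝ) < 2 by norm_num) N]
    linarith
  have hτpos : 0 ≤ τ := by
    have h1 := (abs_le.1 hττ).1
    have h2 : (2:ℝ)^m ≤ 2^Q := pow_le_pow_right₀ (by norm_num) hmQ
    have h3 : (0:ℝ) < 2^Q := pow_pos (by norm_num) Q
    nlinarith
  have hMtτ : M ≤ |(2:ℝ)^N * π + τ| := by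
    rw [abs_of_pos (by linarith)]
    rw [abs_of_pos htpos] at hMt
    linarith
  have hle := hgood ((2:ℝ)^N * π) hMt hMtτ
  have hup : f ((2:ℝ)^N * π) ≤ π^2/3 := by rw [hf]; exact upper N
  have hlow : (8:ℝ) ≤ f ((2:ℝ)^N * π + τ) := by
    rw [hf]
    exact lower m Q N hmQ hQN l τ hl0.le hm.le hττ hH
  have hπ2 : π^2/3 ≤ 4 := by nlinarith [Real.pi_lt_d2]
  have habs := le_abs_self (f ((2:ℝ)^N * π + τ) - f ((2:ℝ)^N * π))
  linarith
end

section
/- Let ℓ^∞ denote the Banach space of bounded real sequences with the supremum norm, and define g : (0,∞) → ℓ^∞ by g(t) := ((n/t)·(1 − e^{−t/n}))_{n∈ℕ, n≥1}. Then g(t) has no limit in ℓ^∞ as t → +∞; that is, there is no L ∈ ℓ^∞ such that lim_{t→+∞} ‖g(t) − L‖_∞ = 0. Consequently, the function f : [0,∞) → ℓ^∞, f(t) := (e^{−t/n})_{n≥1}, does not have a mean value, since g(t) is precisely the componentwise average (1/t)∫₀ᵗ f(s) ds. -/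
open Filter MeasureTheory

/-- **Example (vojko).** Let `g : (0,∞) → ℓ^∞` be given by
`g(t) = ((n/t)·(1 - e^{-t/n}))_{n ≥ 1}`. Then `g(t)` has no limit in `ℓ^∞` as
`t → +∞`; consequently the function `f(t) = (e^{-t/n})_{n ≥ 1}` has no mean value,
since `g(t)` is the componentwise average `(1/t)∫₀ᵗ f(s) ds`. (The index `n ≥ 1` is
encoded as `m + 1` for `m : ℕ`.) -/
theorem stmt_16 (g f : ℝ → lp (fun _ : ℕ => ℝ) ⊤)
    (hg : ∀ t : ℝ, 0 < t → ∀ m : ℕ,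
      g t m = (((m : ℝ) + 1) / t) * (1 - Real.exp (-(t / ((m : ℝ) + 1)))))
    (hf : ∀ t : ℝ, 0 ≤ t → ∀ m : ℕ, f t m = Real.exp (-(t / ((m : ℝ) + 1))))
    (hgf : ∀ t : ℝ, 0 < t → g t = (1 / t) • ∫ s in Set.Ioc (0 : ℝ) t, f s) :
    (¬ ∃ L : lp (fun _ : ℕ => ℝ) ⊤,
      Tendsto (fun t : ℝ => ‖g t - L‖) atTop (nhds 0)) ∧
    (¬ ∃ L : lp (fun _ : ℕ => ℝ) ⊤,
      Tendsto (fun t : ℝ => ‖(1 / t) • (∫ s in Set.Ioc (0 : ℝ) t, f s) - L‖) atTop (nhds 0)) := by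
  have key : ¬ ∃ L : lp (fun _ : ℕ => ℝ) ⊤,
      Tendsto (fun t : ℝ => ‖g t - L‖) atTop (nhds 0) := by
    rintro ⟨L, hL⟩
    -- each component of g t tends to 0
    have hcomp : ∀ m : ℕ, Tendsto (fun t : ℝ => g t m) atTop (nhds 0) := by
      intro m
      have h1 : Tendsto (fun t : ℝ => ((m : ℝ) + 1) / t) atTop (nhds 0) :=
        tendsto_const_nhds.div_atTop tendsto_id
      apply tendsto_of_tendsto_of_tendsto_of_le_of_le' tendsto_const_nhds h1
      · filter_upwards [eventually_gt_atTop (0 : ℝ)] with t ht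
        rw [hg t ht m]
        have hx : (0 : ℝ) ≤ t / ((m : ℝ) + 1) := by positivity
        have he : Real.exp (-(t / ((m : ℝ) + 1))) ≤ 1 := by
          rw [Real.exp_le_one_iff]; linarith
        have : (0 : ℝ) ≤ ((m : ℝ) + 1) / t := by positivity
        nlinarith
      · filter_upwards [eventually_gt_atTop (0 : ℝ)] with t ht
        rw [hg t ht m]
        have hx : (0 : ℝ) ≤ t / ((m : ℝ) + 1) := by positivity
        have he : Real.exp (-(t / ((m : ℝ) + 1))) ≤ 1 := by
          rw [Real.exp_le_one_iff]; linarith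
        have he' : (0 : ℝ) < Real.exp (-(t / ((m : ℝ) + 1))) := Real.exp_pos _
        have : (0 : ℝ) ≤ ((m : ℝ) + 1) / t := by positivity
        nlinarith
    -- each component of L is 0
    have hLm : ∀ m : ℕ, L m = 0 := by
      intro m
      have h2 : Tendsto (fun t : ℝ => g t m) atTop (nhds (L m)) := by
        rw [tendsto_iff_norm_sub_tendsto_zero]
        apply squeeze_zero (fun t => norm_nonneg _) _ hL
        intro t
        have h := lp.norm_apply_le_norm (ENNReal.top_ne_zero) (g t - L) m
        rw [lp.coeFn_sub] at h
        exact h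
      exact tendsto_nhds_unique h2 (hcomp m)
    have hL0 : L = 0 := by
      apply lp.ext
      funext m
      simpa using hLm m
    subst hL0
    simp only [sub_zero] at hL
    -- but the norm stays bounded below
    set c : ℝ := 1 - Real.exp (-(1/3 : ℝ)) with hc
    have hcpos : 0 < c :=
      sub_pos.2 (by rw [Real.exp_lt_one_iff]; norm_num)
    have hev : ∀ᶠ t : ℝ in atTop, c ≤ ‖g t‖ := by
      filter_upwards [eventually_ge_atTop (1 : ℝ)] with t ht
      have ht0 : (0 : ℝ) < t := by linarith
      set m : ℕ := ⌈t⌉₊ with hm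
      have hml : t ≤ (m : ℝ) := Nat.le_ceil t
      have hmu : (m : ℝ) < t + 1 := Nat.ceil_lt_add_one ht0.le
      have hm1 : t ≤ (m : ℝ) + 1 := by linarith
      have hm3 : (m : ℝ) + 1 ≤ 3 * t := by linarith
      have hb : c ≤ g t m := by
        rw [hg t ht0 m]
        have hfrac : (1 : ℝ) ≤ ((m : ℝ) + 1) / t :=
          (one_le_div ht0).2 hm1
        have hx13 : (1/3 : ℝ) ≤ t / ((m : ℝ) + 1) := by
          rw [le_div_iff₀ (by positivity : (0:ℝ) < (m : ℝ) + 1)]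
          linarith
        have hexp : Real.exp (-(t / ((m : ℝ) + 1))) ≤ Real.exp (-(1/3 : ℝ)) := by
          apply Real.exp_le_exp.2; linarith
        have h1c : c ≤ 1 - Real.exp (-(t / ((m : ℝ) + 1))) := by
          simp only [hc]; linarith
        calc c ≤ 1 - Real.exp (-(t / ((m : ℝ) + 1))) := h1c
          _ ≤ (((m : ℝ) + 1) / t) * (1 - Real.exp (-(t / ((m : ℝ) + 1)))) :=
              le_mul_of_one_le_left
                (by have h1 : Real.exp (-(t / ((m : ℝ) + 1))) ≤ 1 :=
                      Real.exp_le_one_iff.2 (by linarith)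
                    linarith) hfrac
      calc c ≤ g t m := hb
        _ ≤ ‖g t m‖ := le_abs_self _
        _ ≤ ‖g t‖ := lp.norm_apply_le_norm ENNReal.top_ne_zero (g t) m
    have hlt : ∀ᶠ t : ℝ in atTop, ‖g t‖ < c := hL.eventually (gt_mem_nhds hcpos)
    rcases (hev.and hlt).exists with ⟨t, h1, h2⟩
    linarith
  refine ⟨key, ?_⟩
  rintro ⟨L, hL⟩
  apply key
  refine ⟨L, hL.congr' ?_⟩
  filter_upwards [eventually_gt_atTop (0 : ℝ)] with t ht
  rw [hgf t ht]
end

section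
/- Let n ∈ ℕ, let Y be a complex Banach space, let h ∈ L¹(ℝⁿ) (complex-valued), let ∅ ≠ I' ⊆ ℝⁿ be unbounded, let c ∈ ℂ ∖ {0}, and let F : ℝⁿ → Y be a bounded continuous function. Then the convolution (h∗F)(t) := ∫_{ℝⁿ} h(σ)·F(t−σ) dσ is a well-defined bounded continuous function from ℝⁿ to Y; if F is quasi-asymptotically (I',c)-almost periodic, then h∗F is quasi-asymptotically (I',c)-almost periodic; if F is quasi-asymptotically (I',c)-uniformly recurrent, then h∗F is quasi-asymptotically (I',c)-uniformly recurrent; and if F is in addition uniformly continuous, then h∗F is uniformly continuous. -/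
open Filter MeasureTheory

/-- `F` is quasi-asymptotically `(I',c)`-almost periodic. -/
def QuasiAsympAPv {n : ℕ} {Y : Type*} [NormedAddCommGroup Y] [NormedSpace ℂ Y]
    (I' : Set (EuclideanSpace ℝ (Fin n))) (c : ℂ)
    (F : EuclideanSpace ℝ (Fin n) → Y) : Prop :=
  ∀ ε > (0 : ℝ), ∃ l > (0 : ℝ), ∀ t₀ ∈ I', ∃ τ ∈ I', ‖τ - t₀‖ ≤ l ∧
    ∃ M > (0 : ℝ), ∀ t : EuclideanSpace ℝ (Fin n),
      M ≤ ‖t‖ → M ≤ ‖t + τ‖ → ‖F (t + τ) - c • F t‖ ≤ ε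

/-- `F` is quasi-asymptotically `(I',c)`-uniformly recurrent. -/
def QuasiAsympURv {n : ℕ} {Y : Type*} [NormedAddCommGroup Y] [NormedSpace ℂ Y]
    (I' : Set (EuclideanSpace ℝ (Fin n))) (c : ℂ)
    (F : EuclideanSpace ℝ (Fin n) → Y) : Prop :=
  ∃ τ : ℕ → EuclideanSpace ℝ (Fin n), ∃ M : ℕ → ℝ,
    (∀ k, τ k ∈ I') ∧ (∀ k, 0 < M k) ∧
    Tendsto (fun k => ‖τ k‖) atTop atTop ∧ Tendsto M atTop atTop ∧
    ∀ ε > (0 : ℝ), ∃ K : ℕ, ∀ k ≥ K, ∀ t : EuclideanSpace ℝ (Fin n),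
      M k ≤ ‖t‖ → M k ≤ ‖t + τ k‖ → ‖F (t + τ k) - c • F t‖ ≤ ε

/-!
Split the convolution integral `∫ h σ • F (t - σ) dσ` at a ball `‖σ‖ ≤ R`. On the ball, both
`t - σ` and `t + τ - σ` stay outside the radius `M` as soon as `‖t‖, ‖t + τ‖ ≥ M + R`, so the
defect `F (· + τ) - c • F` is small there; off the ball the integrand is bounded by a multiple of
`∫_{‖σ‖ > R} ‖h‖`, which tends to `0` as `R → ∞`. Thus the asymptotic radius `M` only has to be
enlarged by `R`; for uniform recurrence, `M k + k` exceeds `M k + R` for all large `k`.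
-/

open Metric ContinuousLinearMap Topology Set
open scoped Convolution

section Integral

variable {α 𝕜 Y : Type*} [MeasurableSpace α] {μ : Measure α} [NontriviallyNormedField 𝕜]
  [NormedAddCommGroup Y] [NormedSpace 𝕜 Y] [NormedSpace ℝ Y] {h : α → 𝕜} {g : α → Y}

theorem norm_integral_smul_le {C : ℝ} (hh : Integrable h μ) (hg : ∀ x, ‖g x‖ ≤ C) :
    ‖∫ x, h x • g x ∂μ‖ ≤ (∫ x, ‖h x‖ ∂μ) * C := by
  rw [← integral_mul_const]
  refine norm_integral_le_of_norm_le (hh.norm.mul_const C) (ae_of_all _ fun x => ?_)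
  rw [norm_smul]
  exact mul_le_mul_of_nonneg_left (hg x) (norm_nonneg _)

end Integral

section Tail

variable {G 𝕜 Y : Type*} [SeminormedAddCommGroup G] [MeasurableSpace G] [OpensMeasurableSpace G]
  {μ : Measure G}

theorem MeasureTheory.Integrable.tendsto_setIntegral_compl_closedBall {E : Type*}
    [NormedAddCommGroup E] [NormedSpace ℝ E] {f : G → E} (hf : Integrable f μ) :
    Tendsto (fun R : ℝ => ∫ x in (closedBall 0 R)ᶜ, f x ∂μ) atTop (𝓝 0) := by
  have hanti : Antitone fun R : ℝ => (closedBall (0 : G) R)ᶜ :=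
    fun _ _ hRR' => compl_subset_compl.2 (closedBall_subset_closedBall hRR')
  have hempty : ⋂ R : ℝ, (closedBall (0 : G) R)ᶜ = ∅ :=
    eq_empty_of_forall_notMem fun x hx =>
      mem_iInter.1 hx ‖x‖ (mem_closedBall_zero_iff.2 le_rfl)
  simpa [hempty] using tendsto_setIntegral_of_antitone
    (fun R => measurableSet_closedBall.compl) hanti ⟨0, hf.integrableOn⟩

variable [NontriviallyNormedField 𝕜] [NormedAddCommGroup Y] [NormedSpace 𝕜 Y] [NormedSpace ℝ Y]
  {h : G → 𝕜} {g : G → Y}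

theorem norm_integral_smul_le_of_norm_le_on_closedBall {R ε B : ℝ} (hh : Integrable h μ)
    (hε : 0 ≤ ε) (hball : ∀ x ∈ closedBall (0 : G) R, ‖g x‖ ≤ ε) (hB : ∀ x, ‖g x‖ ≤ B) :
    ‖∫ x, h x • g x ∂μ‖ ≤
      (∫ x, ‖h x‖ ∂μ) * ε + (∫ x in (closedBall 0 R)ᶜ, ‖h x‖ ∂μ) * B := by
  set K := (closedBall (0 : G) R)ᶜ
  have hK : MeasurableSet K := measurableSet_closedBall.compl
  have hKint : Integrable (K.indicator fun x => ‖h x‖ * B) μ := (hh.norm.mul_const B).indicator hK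
  calc ‖∫ x, h x • g x ∂μ‖ ≤ ∫ x, (‖h x‖ * ε + K.indicator (fun x => ‖h x‖ * B) x) ∂μ := by
        refine norm_integral_le_of_norm_le ((hh.norm.mul_const ε).add hKint)
          (ae_of_all _ fun x => ?_)
        rw [norm_smul]
        by_cases hx : x ∈ K
        · rw [indicator_of_mem hx]
          linarith [mul_le_mul_of_nonneg_left (hB x) (norm_nonneg (h x)),
            mul_nonneg (norm_nonneg (h x)) hε]
        · rw [indicator_of_notMem hx, add_zero]
          exact mul_le_mul_of_nonneg_left (hball x (notMem_compl_iff.1 hx)) (norm_nonneg _)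
    _ = _ := by
      rw [integral_add (hh.norm.mul_const ε) hKint, integral_indicator hK, integral_mul_const,
        integral_mul_const]

end Tail

section Convolution

variable {G 𝕜 Y : Type*} [SeminormedAddCommGroup G] [MeasurableSpace G] {μ : Measure G}
  [NontriviallyNormedField 𝕜] [NormedAddCommGroup Y] [NormedSpace 𝕜 Y] {h : G → 𝕜} {F : G → Y}

theorem convolutionExists_lsmul_of_bounded [OpensMeasurableSpace G]
    [SecondCountableTopologyEither G Y] {C : ℝ} (hh : Integrable h μ) (hF : Continuous F)
    (hC : ∀ x, ‖F x‖ ≤ C) : ConvolutionExists h F (lsmul 𝕜 𝕜) μ := fun t =>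
  hh.smul_bdd C (hF.comp (continuous_sub_left t)).aestronglyMeasurable
    (ae_of_all _ fun σ => hC (t - σ))

variable [NormedSpace ℝ Y]

theorem norm_convolution_lsmul_le {C : ℝ} (hh : Integrable h μ) (hC : ∀ x, ‖F x‖ ≤ C) (t : G) :
    ‖(h ⋆[lsmul 𝕜 𝕜, μ] F) t‖ ≤ (∫ x, ‖h x‖ ∂μ) * C :=
  norm_integral_smul_le hh fun σ => hC (t - σ)

variable [SMulCommClass ℝ 𝕜 Y]

theorem convolution_lsmul_sub_smul (hF : ConvolutionExists h F (lsmul 𝕜 𝕜) μ) (c : 𝕜) (s t : G) :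
    (h ⋆[lsmul 𝕜 𝕜, μ] F) s - c • (h ⋆[lsmul 𝕜 𝕜, μ] F) t =
      ∫ σ, h σ • (F (s - σ) - c • F (t - σ)) ∂μ := by
  have hs : Integrable (fun σ => h σ • F (s - σ)) μ := hF s
  have ht : Integrable (fun σ => c • (h σ • F (t - σ))) μ := (hF t).smul c
  rw [convolution_lsmul, convolution_lsmul, ← integral_smul, ← integral_sub hs ht]
  simp only [smul_sub, smul_comm c]

theorem norm_convolution_lsmul_add_sub_smul_le [OpensMeasurableSpace G] (hh : Integrable h μ)
    (hF : ConvolutionExists h F (lsmul 𝕜 𝕜) μ) {c : 𝕜} {τ : G} {M R ε B : ℝ} (hε : 0 ≤ ε)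
    (hB : ∀ s, ‖F (s + τ) - c • F s‖ ≤ B)
    (hM : ∀ s, M ≤ ‖s‖ → M ≤ ‖s + τ‖ → ‖F (s + τ) - c • F s‖ ≤ ε)
    {t : G} (ht : M + R ≤ ‖t‖) (htτ : M + R ≤ ‖t + τ‖) :
    ‖(h ⋆[lsmul 𝕜 𝕜, μ] F) (t + τ) - c • (h ⋆[lsmul 𝕜 𝕜, μ] F) t‖ ≤
      (∫ x, ‖h x‖ ∂μ) * ε + (∫ x in (closedBall 0 R)ᶜ, ‖h x‖ ∂μ) * B := by
  have hshift : ∀ σ, t + τ - σ = t - σ + τ := fun σ => by abel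
  rw [convolution_lsmul_sub_smul hF]
  refine norm_integral_smul_le_of_norm_le_on_closedBall hh hε (fun σ hσ => ?_) fun σ => ?_
  · rw [mem_closedBall_zero_iff] at hσ
    rw [hshift]
    refine hM _ ?_ ?_
    · linarith [norm_sub_norm_le t σ]
    · rw [← hshift]
      linarith [norm_sub_norm_le (t + τ) σ]
  · rw [hshift]
    exact hB _

theorem exists_forall_norm_convolution_lsmul_add_sub_smul_le [OpensMeasurableSpace G]
    (hh : Integrable h μ) (hF : ConvolutionExists h F (lsmul 𝕜 𝕜) μ) {C : ℝ}
    (hC : ∀ x, ‖F x‖ ≤ C) (c : 𝕜) {ε : ℝ} (hε : 0 < ε) :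
    ∃ ε' > 0, ∃ R ≥ 0, ∀ τ M, (∀ s, M ≤ ‖s‖ → M ≤ ‖s + τ‖ → ‖F (s + τ) - c • F s‖ ≤ ε') →
      ∀ t, M + R ≤ ‖t‖ → M + R ≤ ‖t + τ‖ →
        ‖(h ⋆[lsmul 𝕜 𝕜, μ] F) (t + τ) - c • (h ⋆[lsmul 𝕜 𝕜, μ] F) t‖ ≤ ε := by
  have hB : ∀ τ s, ‖F (s + τ) - c • F s‖ ≤ C + ‖c‖ * C := fun τ s => by
    refine (norm_sub_le _ _).trans ?_
    rw [norm_smul]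
    gcongr
    exacts [hC _, hC _]
  obtain ⟨ε', hε', hAε'⟩ := exists_pos_mul_lt (half_pos hε) (∫ x, ‖h x‖ ∂μ)
  have htail : ∀ᶠ R in atTop, (∫ x in (closedBall 0 R)ᶜ, ‖h x‖ ∂μ) * (C + ‖c‖ * C) < ε / 2 := by
    have := hh.norm.tendsto_setIntegral_compl_closedBall.mul_const (C + ‖c‖ * C)
    rw [zero_mul] at this
    exact this.eventually (gt_mem_nhds (half_pos hε))
  obtain ⟨R, hRtail, hR⟩ := (htail.and (eventually_ge_atTop 0)).exists
  refine ⟨ε', hε', R, hR, fun τ M hM t ht htτ => ?_⟩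
  have := norm_convolution_lsmul_add_sub_smul_le hh hF hε'.le (hB τ) hM ht htτ
  linarith

theorem UniformContinuous.convolution_lsmul (hU : UniformContinuous F) (hh : Integrable h μ)
    (hF : ConvolutionExists h F (lsmul 𝕜 𝕜) μ) : UniformContinuous (h ⋆[lsmul 𝕜 𝕜, μ] F) := by
  rw [Metric.uniformContinuous_iff] at hU ⊢
  intro ε hε
  obtain ⟨ε', hε', hAε'⟩ := exists_pos_mul_lt hε (∫ x, ‖h x‖ ∂μ)
  obtain ⟨δ, hδ, hFδ⟩ := hU ε' hε'
  refine ⟨δ, hδ, fun {s t} hst => ?_⟩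
  have hdiff : ∀ σ, ‖F (s - σ) - (1 : 𝕜) • F (t - σ)‖ ≤ ε' := fun σ => by
    rw [one_smul, ← dist_eq_norm]
    exact (hFδ (by rwa [dist_sub_right])).le
  rw [dist_eq_norm, ← one_smul 𝕜 ((h ⋆[lsmul 𝕜 𝕜, μ] F) t), convolution_lsmul_sub_smul hF]
  exact (norm_integral_smul_le hh hdiff).trans_lt hAε'

end Convolution

section Euclidean

variable {n : ℕ} {Y : Type*} [NormedAddCommGroup Y] [NormedSpace ℂ Y]
  {μ : Measure (EuclideanSpace ℝ (Fin n))} {h : EuclideanSpace ℝ (Fin n) → ℂ}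
  {F : EuclideanSpace ℝ (Fin n) → Y} {I' : Set (EuclideanSpace ℝ (Fin n))} {c : ℂ} {C : ℝ}

theorem QuasiAsympAPv.convolution_lsmul (hAP : QuasiAsympAPv I' c F) (hh : Integrable h μ)
    (hF : ConvolutionExists h F (lsmul ℂ ℂ) μ) (hC : ∀ x, ‖F x‖ ≤ C) :
    QuasiAsympAPv I' c (h ⋆[lsmul ℂ ℂ, μ] F) := by
  intro ε hε
  obtain ⟨ε', hε', R, hR, hconv⟩ :=
    exists_forall_norm_convolution_lsmul_add_sub_smul_le hh hF hC c hε
  obtain ⟨l, hl, hτ⟩ := hAP ε' hε'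
  refine ⟨l, hl, fun t₀ ht₀ => ?_⟩
  obtain ⟨τ, hτI', hτt₀, M, hM, hFτ⟩ := hτ t₀ ht₀
  exact ⟨τ, hτI', hτt₀, M + R, by positivity, hconv τ M hFτ⟩

theorem QuasiAsympURv.convolution_lsmul (hUR : QuasiAsympURv I' c F) (hh : Integrable h μ)
    (hF : ConvolutionExists h F (lsmul ℂ ℂ) μ) (hC : ∀ x, ‖F x‖ ≤ C) :
    QuasiAsympURv I' c (h ⋆[lsmul ℂ ℂ, μ] F) := by
  obtain ⟨τ, M, hτI', hM, hτ, hMtop, hFτ⟩ := hUR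
  refine ⟨τ, fun k => M k + k, hτI', fun k => add_pos_of_pos_of_nonneg (hM k) k.cast_nonneg, hτ,
    hMtop.atTop_add_atTop tendsto_natCast_atTop_atTop, fun ε hε => ?_⟩
  obtain ⟨ε', hε', R, -, hconv⟩ :=
    exists_forall_norm_convolution_lsmul_add_sub_smul_le hh hF hC c hε
  obtain ⟨K, hK⟩ := hFτ ε' hε'
  refine ⟨max K ⌈R⌉₊, fun k hk t ht htτ => ?_⟩
  have hRk : R ≤ k := (Nat.le_ceil R).trans (mod_cast le_of_max_le_right hk)
  exact hconv (τ k) (M k) (hK k (le_of_max_le_left hk)) t (by linarith) (by linarith)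

end Euclidean

theorem stmt_17_general {n : ℕ} {Y : Type*}
    [NormedAddCommGroup Y] [NormedSpace ℂ Y]
    (h : EuclideanSpace ℝ (Fin n) → ℂ) (hh : Integrable h)
    (I' : Set (EuclideanSpace ℝ (Fin n)))
    (c : ℂ)
    (F : EuclideanSpace ℝ (Fin n) → Y)
    (hFcont : Continuous F) (hFbdd : ∃ C : ℝ, ∀ t, ‖F t‖ ≤ C) :
    (∀ t, Integrable fun σ => h σ • F (t - σ)) ∧
    Continuous (fun t => ∫ σ, h σ • F (t - σ)) ∧
    (∃ C : ℝ, ∀ t, ‖∫ σ, h σ • F (t - σ)‖ ≤ C) ∧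
    (QuasiAsympAPv I' c F → QuasiAsympAPv I' c (fun t => ∫ σ, h σ • F (t - σ))) ∧
    (QuasiAsympURv I' c F → QuasiAsympURv I' c (fun t => ∫ σ, h σ • F (t - σ))) ∧
    (UniformContinuous F → UniformContinuous (fun t => ∫ σ, h σ • F (t - σ))) := by
  obtain ⟨C, hC⟩ := hFbdd
  have hF : ConvolutionExists h F (lsmul ℂ ℂ) := convolutionExists_lsmul_of_bounded hh hFcont hC
  exact ⟨hF,
    BddAbove.continuous_convolution_right_of_integrable (lsmul ℂ ℂ) ⟨C, forall_mem_range.2 hC⟩ hh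
      hFcont, ⟨_, norm_convolution_lsmul_le hh hC⟩, fun hAP => hAP.convolution_lsmul hh hF hC,
    fun hUR => hUR.convolution_lsmul hh hF hC, fun hU => hU.convolution_lsmul hh hF⟩

/-- **Lemma (milenko1).** Let `h ∈ L¹(ℝⁿ)`, `∅ ≠ I' ⊆ ℝⁿ` unbounded, `c ∈ ℂ \ {0}`, and
`F : ℝⁿ → Y` bounded and continuous. Then `h∗F` is a well-defined bounded continuous
function; quasi-asymptotic `(I',c)`-almost periodicity and quasi-asymptotic
`(I',c)`-uniform recurrence of `F` transfer to `h∗F`; and uniform continuity of `F`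
transfers to `h∗F`. -/
theorem stmt_17 {n : ℕ} {Y : Type*}
    [NormedAddCommGroup Y] [NormedSpace ℂ Y] [CompleteSpace Y]
    (h : EuclideanSpace ℝ (Fin n) → ℂ) (hh : Integrable h)
    (I' : Set (EuclideanSpace ℝ (Fin n)))
    (hI'ne : I'.Nonempty) (hI'unb : ¬ Bornology.IsBounded I')
    (c : ℂ) (hc : c ≠ 0)
    (F : EuclideanSpace ℝ (Fin n) → Y)
    (hFcont : Continuous F) (hFbdd : ∃ C : ℝ, ∀ t, ‖F t‖ ≤ C) :
    (∀ t, Integrable fun σ => h σ • F (t - σ)) ∧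
    Continuous (fun t => ∫ σ, h σ • F (t - σ)) ∧
    (∃ C : ℝ, ∀ t, ‖∫ σ, h σ • F (t - σ)‖ ≤ C) ∧
    (QuasiAsympAPv I' c F → QuasiAsympAPv I' c (fun t => ∫ σ, h σ • F (t - σ))) ∧
    (QuasiAsympURv I' c F → QuasiAsympURv I' c (fun t => ∫ σ, h σ • F (t - σ))) ∧
    (UniformContinuous F → UniformContinuous (fun t => ∫ σ, h σ • F (t - σ))) :=
  stmt_17_general h hh I' c F hFcont hFbdd
end

section
/- Let α > 0 and suppose a : ℝ → [α,∞) and f : ℝ → ℝ are slowly oscillating in the classical sense (bounded, uniformly continuous, and such that for each ω ∈ ℝ, lim_{|t|→+∞} |g(t+ω) − g(t)| = 0, where g stands for a or f). Then the function F : ℝ → ℝ defined by F(t) := ∫_{−∞}^{t} e^{−∫_{s}^{t} a(r) dr}·f(s) ds is slowly oscillating in the same sense: it is bounded, uniformly continuous, and for each ω ∈ ℝ, lim_{|t|→+∞} |F(t+ω) − F(t)| = 0. -/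
/-!
Translating by `ω` turns `F (t + ω)` into the same integral built from `a (· + ω)` and
`f (· + ω)`, so everything reduces to one stability estimate. With `|f| ≤ C`: if `a'`, `f'`
are `δ`-close to `a`, `f` on the window `[t - T, t]`, the two integrals at `t` differ by at
most `2 C e^{-αT} / α` (the tails before `t - T`, controlled by the kernel bound
`e^{-α (t - s)}`) plus `δ (1 + C T) T` (on the window, where `x ↦ e^{-x}` is `1`-Lipschitz on
`[0, ∞)`). Choosing `T` large and then `δ` small, uniform continuity of `a`, `f` gives the
closeness for all windows when `|ω|` is small, and slow oscillation gives it for windows far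
out.
-/

open MeasureTheory intervalIntegral

/-- `g : ℝ → ℝ` is slowly oscillating in the classical sense: bounded, uniformly
continuous, and `|g(t+ω) - g(t)| → 0` as `|t| → +∞` for every `ω ∈ ℝ`. -/
def SlowlyOscillating (g : ℝ → ℝ) : Prop :=
  (∃ C : ℝ, ∀ t : ℝ, |g t| ≤ C) ∧ UniformContinuous g ∧
    ∀ ω : ℝ, ∀ ε > (0 : ℝ), ∃ M : ℝ, ∀ t : ℝ, M ≤ |t| → |g (t + ω) - g t| < ε

open Set Real Filter Topology

lemma abs_exp_neg_sub_exp_neg_le {x y : ℝ} (hx : 0 ≤ x) (hy : 0 ≤ y) :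
    |exp (-x) - exp (-y)| ≤ |x - y| := by
  wlog hxy : x ≤ y generalizing x y
  · rw [abs_sub_comm, abs_sub_comm x]
    exact this hy hx (le_of_not_ge hxy)
  rw [abs_of_nonneg (sub_nonneg.2 (exp_le_exp.2 (neg_le_neg hxy))), abs_sub_comm,
    abs_of_nonneg (sub_nonneg.2 hxy)]
  have hy' : exp (-y) = exp (-x) * exp (-(y - x)) := by rw [← exp_add]; ring_nf
  nlinarith [add_one_le_exp (-(y - x)), exp_le_one_iff.2 (neg_nonpos.2 hx), exp_pos (-x)]

lemma exp_neg_mul_sub (α t s : ℝ) : exp (-(α * (t - s))) = exp (-(α * t)) * exp (α * s) := by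
  rw [← exp_add]; ring_nf

lemma integrableOn_Iic_exp_neg_mul_sub {α : ℝ} (hα : 0 < α) (u t : ℝ) :
    IntegrableOn (fun s => exp (-(α * (t - s)))) (Iic u) := by
  simp_rw [exp_neg_mul_sub]
  exact (integrableOn_exp_mul_Iic hα u).const_mul _

lemma integral_Iic_exp_neg_mul_sub {α : ℝ} (hα : 0 < α) (u t : ℝ) :
    ∫ s in Iic u, exp (-(α * (t - s))) = exp (-(α * (t - u))) / α := by
  simp_rw [exp_neg_mul_sub, MeasureTheory.integral_const_mul, integral_exp_mul_Iic hα]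
  ring

noncomputable def expKernelIntegral (a f : ℝ → ℝ) (t : ℝ) : ℝ :=
  ∫ s in Iic t, exp (-(∫ r in s..t, a r)) * f s

section
variable {α C δ s t T : ℝ} {a a' f f' : ℝ → ℝ}

lemma mul_sub_le_integral (ha : ∀ r, α ≤ a r) (hac : Continuous a) (hst : s ≤ t) :
    α * (t - s) ≤ ∫ r in s..t, a r := by
  simpa [mul_comm] using integral_mono_on hst (intervalIntegrable_const (μ := volume))
    (hac.intervalIntegrable s t) fun r _ => ha r

lemma exp_neg_integral_le (ha : ∀ r, α ≤ a r) (hac : Continuous a) (hst : s ≤ t) :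
    exp (-(∫ r in s..t, a r)) ≤ exp (-(α * (t - s))) :=
  exp_le_exp.2 (neg_le_neg (mul_sub_le_integral ha hac hst))

lemma norm_exp_neg_integral_mul_le (ha : ∀ r, α ≤ a r) (hac : Continuous a)
    (hf : ∀ r, |f r| ≤ C) (hst : s ≤ t) :
    ‖exp (-(∫ r in s..t, a r)) * f s‖ ≤ C * exp (-(α * (t - s))) := by
  rw [norm_mul, norm_of_nonneg (exp_pos _).le, norm_eq_abs, mul_comm C]
  exact mul_le_mul (exp_neg_integral_le ha hac hst) (hf s) (abs_nonneg _) (exp_pos _).le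

lemma continuous_exp_neg_integral (hac : Continuous a) (t : ℝ) :
    Continuous fun s => exp (-(∫ r in s..t, a r)) := by
  have h : Continuous fun s => ∫ r in t..s, a r :=
    continuous_primitive (fun u v => hac.intervalIntegrable u v) t
  refine continuous_exp.comp (h.congr fun s => ?_)
  rw [integral_symm s t]

lemma integrableOn_exp_neg_integral_mul (hα : 0 < α) (ha : ∀ r, α ≤ a r) (hac : Continuous a)
    (hfm : Measurable f) (hf : ∀ r, |f r| ≤ C) (t : ℝ) :
    IntegrableOn (fun s => exp (-(∫ r in s..t, a r)) * f s) (Iic t) := by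
  refine Integrable.mono' ((integrableOn_Iic_exp_neg_mul_sub hα t t).const_mul C)
    ((continuous_exp_neg_integral hac t).measurable.mul hfm).aestronglyMeasurable ?_
  refine (ae_restrict_iff' measurableSet_Iic).2 (Eventually.of_forall fun s hs => ?_)
  exact norm_exp_neg_integral_mul_le ha hac hf hs

lemma abs_setIntegral_Iic_exp_neg_integral_mul_le (hα : 0 < α) (ha : ∀ r, α ≤ a r)
    (hac : Continuous a) (hf : ∀ r, |f r| ≤ C) {u : ℝ} (hut : u ≤ t) :
    |∫ s in Iic u, exp (-(∫ r in s..t, a r)) * f s| ≤ C * exp (-(α * (t - u))) / α := by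
  rw [← norm_eq_abs, mul_div_assoc, ← integral_Iic_exp_neg_mul_sub hα,
    ← MeasureTheory.integral_const_mul]
  refine norm_integral_le_of_norm_le ((integrableOn_Iic_exp_neg_mul_sub hα u t).const_mul C) ?_
  refine (ae_restrict_iff' measurableSet_Iic).2 (Eventually.of_forall fun s hs => ?_)
  exact norm_exp_neg_integral_mul_le ha hac hf (le_trans hs hut)

lemma abs_expKernelIntegral_le (hα : 0 < α) (ha : ∀ r, α ≤ a r) (hac : Continuous a)
    (hf : ∀ r, |f r| ≤ C) (t : ℝ) : |expKernelIntegral a f t| ≤ C / α := by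
  simpa [expKernelIntegral] using
    abs_setIntegral_Iic_exp_neg_integral_mul_le hα ha hac hf (le_refl t)

lemma abs_exp_neg_integral_mul_sub_le (ha : ∀ r, 0 ≤ a r) (ha' : ∀ r, 0 ≤ a' r)
    (hac : Continuous a) (hac' : Continuous a') (hf : ∀ r, |f r| ≤ C)
    (had : ∀ r ∈ Icc (t - T) t, |a' r - a r| ≤ δ) (hfd : ∀ r ∈ Icc (t - T) t, |f' r - f r| ≤ δ)
    (hs : s ∈ Icc (t - T) t) :
    |exp (-(∫ r in s..t, a' r)) * f' s - exp (-(∫ r in s..t, a r)) * f s| ≤ δ + C * (δ * T) := by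
  have hδ : 0 ≤ δ := (abs_nonneg _).trans (hfd s hs)
  have hI : |(∫ r in s..t, a' r) - ∫ r in s..t, a r| ≤ δ * T := by
    rw [← integral_sub (hac'.intervalIntegrable s t) (hac.intervalIntegrable s t), ← norm_eq_abs]
    refine (intervalIntegral.norm_integral_le_of_norm_le_const (C := δ) fun r hr => ?_).trans ?_
    · rw [uIoc_of_le hs.2] at hr
      exact had r ⟨hs.1.trans hr.1.le, hr.2⟩
    · rw [abs_of_nonneg (sub_nonneg.2 hs.2)]
      exact mul_le_mul_of_nonneg_left (by linarith [hs.1]) hδ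
  have hK : |exp (-(∫ r in s..t, a' r)) - exp (-(∫ r in s..t, a r))| ≤ δ * T :=
    (abs_exp_neg_sub_exp_neg_le (integral_nonneg hs.2 fun r _ => ha' r)
      (integral_nonneg hs.2 fun r _ => ha r)).trans hI
  have hK' : exp (-(∫ r in s..t, a' r)) ≤ 1 :=
    exp_le_one_iff.2 (neg_nonpos.2 (integral_nonneg hs.2 fun r _ => ha' r))
  calc |exp (-(∫ r in s..t, a' r)) * f' s - exp (-(∫ r in s..t, a r)) * f s|
      = |exp (-(∫ r in s..t, a' r)) * (f' s - f s) +
          (exp (-(∫ r in s..t, a' r)) - exp (-(∫ r in s..t, a r))) * f s| := by ring_nf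
    _ ≤ exp (-(∫ r in s..t, a' r)) * |f' s - f s| +
          |exp (-(∫ r in s..t, a' r)) - exp (-(∫ r in s..t, a r))| * |f s| := by
        refine (abs_add_le _ _).trans_eq ?_
        rw [abs_mul, abs_mul, abs_of_pos (exp_pos _)]
    _ ≤ 1 * δ + δ * T * C :=
        add_le_add (mul_le_mul hK' (hfd s hs) (abs_nonneg _) zero_le_one)
          (mul_le_mul hK (hf s) (abs_nonneg _) ((abs_nonneg _).trans hK))
    _ = δ + C * (δ * T) := by ring

lemma expKernelIntegral_eq_add (hα : 0 < α) (ha : ∀ r, α ≤ a r) (hac : Continuous a)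
    (hfm : Measurable f) (hf : ∀ r, |f r| ≤ C) (hT : 0 ≤ T) :
    expKernelIntegral a f t = (∫ s in Iic (t - T), exp (-(∫ r in s..t, a r)) * f s) +
      ∫ s in Ioc (t - T) t, exp (-(∫ r in s..t, a r)) * f s := by
  have hint := integrableOn_exp_neg_integral_mul hα ha hac hfm hf t
  rw [← setIntegral_union (Iic_disjoint_Ioc le_rfl) measurableSet_Ioc
    (hint.mono_set (Iic_subset_Iic.2 (by linarith))) (hint.mono_set Ioc_subset_Iic_self),
    Iic_union_Ioc_eq_Iic (by linarith)]
  rfl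

lemma abs_expKernelIntegral_sub_le (hα : 0 < α) (ha : ∀ r, α ≤ a r) (ha' : ∀ r, α ≤ a' r)
    (hac : Continuous a) (hac' : Continuous a') (hfm : Measurable f) (hfm' : Measurable f')
    (hf : ∀ r, |f r| ≤ C) (hf' : ∀ r, |f' r| ≤ C) (hT : 0 ≤ T)
    (had : ∀ r ∈ Icc (t - T) t, |a' r - a r| ≤ δ) (hfd : ∀ r ∈ Icc (t - T) t, |f' r - f r| ≤ δ) :
    |expKernelIntegral a' f' t - expKernelIntegral a f t| ≤
      2 * (C * exp (-(α * T)) / α) + (δ + C * (δ * T)) * T := by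
  have htail {b g : ℝ → ℝ} (hb : ∀ r, α ≤ b r) (hbc : Continuous b) (hg : ∀ r, |g r| ≤ C) :
      |∫ s in Iic (t - T), exp (-(∫ r in s..t, b r)) * g s| ≤ C * exp (-(α * T)) / α := by
    simpa using
      abs_setIntegral_Iic_exp_neg_integral_mul_le hα hb hbc hg (by linarith : t - T ≤ t)
  have hwindow : |(∫ s in Ioc (t - T) t, exp (-(∫ r in s..t, a' r)) * f' s) -
      ∫ s in Ioc (t - T) t, exp (-(∫ r in s..t, a r)) * f s| ≤ (δ + C * (δ * T)) * T := by
    rw [← integral_sub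
      ((integrableOn_exp_neg_integral_mul hα ha' hac' hfm' hf' t).mono_set
        Ioc_subset_Iic_self)
      ((integrableOn_exp_neg_integral_mul hα ha hac hfm hf t).mono_set
        Ioc_subset_Iic_self), ← norm_eq_abs]
    refine (norm_setIntegral_le_of_norm_le_const measure_Ioc_lt_top fun s hs =>
      abs_exp_neg_integral_mul_sub_le (fun r => hα.le.trans (ha r))
        (fun r => hα.le.trans (ha' r)) hac hac' hf had hfd (Ioc_subset_Icc_self hs)).trans_eq ?_
    rw [volume_real_Ioc_of_le (by linarith), sub_sub_cancel]
  rw [expKernelIntegral_eq_add hα ha' hac' hfm' hf' hT,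
    expKernelIntegral_eq_add hα ha hac hfm hf hT]
  have h₁ := abs_le.1 (htail ha hac hf)
  have h₂ := abs_le.1 (htail ha' hac' hf')
  have h₃ := abs_le.1 hwindow
  exact abs_le.2 ⟨by linarith, by linarith⟩

lemma exists_tail_add_window_lt (hα : 0 < α) (C : ℝ) {ε : ℝ} (hε : 0 < ε) :
    ∃ T, 0 ≤ T ∧ ∃ δ > 0, 2 * (C * exp (-(α * T)) / α) + (δ + C * (δ * T)) * T < ε := by
  have htail : Tendsto (fun T => 2 * (C * exp (-(α * T)) / α)) atTop (𝓝 0) := by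
    simpa using ((tendsto_exp_atBot.comp (tendsto_neg_atTop_atBot.comp
      (tendsto_id.const_mul_atTop hα))).const_mul C).div_const α |>.const_mul 2
  obtain ⟨T, hT, hTε⟩ :=
    ((eventually_ge_atTop 0).and (htail.eventually (gt_mem_nhds (half_pos hε)))).exists
  have hwindow : Tendsto (fun δ => (δ + C * (δ * T)) * T) (𝓝[>] 0) (𝓝 0) := by
    have : Continuous fun δ : ℝ => (δ + C * (δ * T)) * T := by fun_prop
    simpa using (this.tendsto 0).mono_left nhdsWithin_le_nhds
  obtain ⟨δ, hδ, hδε⟩ :=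
    ((eventually_mem_nhdsWithin : ∀ᶠ δ in 𝓝[>] (0 : ℝ), δ ∈ Ioi 0).and
      (hwindow.eventually (gt_mem_nhds (half_pos hε)))).exists
  exact ⟨T, hT, δ, hδ, by linarith⟩

lemma expKernelIntegral_add (a f : ℝ → ℝ) (t ω : ℝ) :
    expKernelIntegral a f (t + ω) =
      expKernelIntegral (fun r => a (r + ω)) (fun s => f (s + ω)) t := by
  rw [expKernelIntegral, ← (measurePreserving_add_right volume ω).setIntegral_preimage_emb
    (measurableEmbedding_addRight ω), preimage_add_const_Iic, add_sub_cancel_right]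
  simp_rw [← integral_comp_add_right]
  rfl

lemma exists_abs_expKernelIntegral_add_sub_lt (hα : 0 < α) (ha : ∀ r, α ≤ a r)
    (hac : Continuous a) (hfm : Measurable f) (hf : ∀ r, |f r| ≤ C) {ε : ℝ} (hε : 0 < ε) :
    ∃ T, 0 ≤ T ∧ ∃ δ > 0, ∀ t ω : ℝ,
      (∀ r ∈ Icc (t - T) t, |a (r + ω) - a r| ≤ δ ∧ |f (r + ω) - f r| ≤ δ) →
        |expKernelIntegral a f (t + ω) - expKernelIntegral a f t| < ε := by
  obtain ⟨T, hT, δ, hδ, hε⟩ := exists_tail_add_window_lt hα C hε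
  refine ⟨T, hT, δ, hδ, fun t ω hω => ?_⟩
  rw [expKernelIntegral_add]
  exact (abs_expKernelIntegral_sub_le hα ha (fun r => ha (r + ω)) hac
    (hac.comp (continuous_add_const ω)) hfm (hfm.comp (measurable_add_const ω)) hf
    (fun r => hf (r + ω)) hT (fun r hr => (hω r hr).1) (fun r hr => (hω r hr).2)).trans_lt hε

end

lemma le_abs_of_mem_Icc_sub {M T t r : ℝ} (hT : 0 ≤ T) (ht : M + T ≤ |t|)
    (hr : r ∈ Icc (t - T) t) : M ≤ |r| := by
  rcases le_abs'.1 ht with h | h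
  · linarith [neg_abs_le r, hr.2]
  · linarith [le_abs_self r, hr.1]

/-- **Lemma (tehno).** Let `α > 0` and suppose `a : ℝ → [α,∞)` and `f : ℝ → ℝ` are
slowly oscillating. Then `F(t) := ∫_{-∞}^t e^{-∫_s^t a(r) dr} f(s) ds` is slowly
oscillating as well. -/
theorem stmt_18 (α : ℝ) (hα : 0 < α) (a f : ℝ → ℝ) (ha : ∀ t, α ≤ a t)
    (hsa : SlowlyOscillating a) (hsf : SlowlyOscillating f) :
    SlowlyOscillating (fun t => ∫ s in Set.Iic t, Real.exp (-(∫ r in s..t, a r)) * f s) := by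
  obtain ⟨C, hC⟩ := hsf.1
  have hclose {ε : ℝ} (hε : 0 < ε) := exists_abs_expKernelIntegral_add_sub_lt hα ha
    hsa.2.1.continuous hsf.2.1.continuous.measurable hC hε
  refine ⟨⟨C / α, abs_expKernelIntegral_le hα ha hsa.2.1.continuous hC⟩, ?_, ?_⟩
  · refine Metric.uniformContinuous_iff.2 fun ε hε => ?_
    obtain ⟨T, -, δ, hδ, hF⟩ := hclose hε
    obtain ⟨ηa, hηa, ha'⟩ := Metric.uniformContinuous_iff.1 hsa.2.1 δ hδ
    obtain ⟨ηf, hηf, hf'⟩ := Metric.uniformContinuous_iff.1 hsf.2.1 δ hδ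
    refine ⟨min ηa ηf, lt_min hηa hηf, fun x y hxy => ?_⟩
    have hshift (r : ℝ) : dist (r + (x - y)) r < min ηa ηf := by
      rwa [dist_eq, add_sub_cancel_left, ← dist_eq]
    have := hF y (x - y) fun r _ =>
      ⟨(ha' ((hshift r).trans_le (min_le_left _ _))).le,
        (hf' ((hshift r).trans_le (min_le_right _ _))).le⟩
    rwa [add_sub_cancel, ← dist_eq] at this
  · intro ω ε hε
    obtain ⟨T, hT, δ, hδ, hF⟩ := hclose hε
    obtain ⟨Ma, hMa⟩ := hsa.2.2 ω δ hδ
    obtain ⟨Mf, hMf⟩ := hsf.2.2 ω δ hδ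
    refine ⟨max Ma Mf + T, fun t ht => hF t ω fun r hr => ?_⟩
    have hr := le_abs_of_mem_Icc_sub hT ht hr
    exact ⟨(hMa r (le_of_max_le_left hr)).le, (hMf r (le_of_max_le_right hr)).le⟩
end
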